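/- arXiv:2101.09670 — 9 statements merged into one kernel-verified Lean document; each statement's English description precedes it below -/
import Mathlib

section
/- Let (g, μ) be a Lie algebra, h an ideal of g of codimension 1, x an element of g outside h, and D a derivation of h. Define the antisymmetric bilinear map φ_D by φ_D(x,h) = D(h) = −φ_D(h,x) for h in h, φ_D(h,h') = 0 for h, h' in h, and φ_D(x,x) = 0. Then μ_t = μ + tφ_D is a Lie bracket on g for all t (the Grunewald–O'Halloran deformation). -/
/-- The Dixmier 2-cocycle of a derivation `D` of a codimension-1 ideal `h`, with
respect to the decomposition `g = Kx ⊕ h` given by the coordinate functional `c`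
(so `v - c v • x ∈ h`): `φ_D(u,v) = c(u) D(v_h) - c(v) D(u_h)`. -/
def dixmierCocycle {K V : Type*} [Field K] [AddCommGroup V] [Module K V]
    (D : V →ₗ[K] V) (c : V →ₗ[K] K) (x : V) (u v : V) : V :=
  c u • D (v - c v • x) - c v • D (u - c u • x)

/-- Grunewald–O'Halloran: μ_t = μ + t φ_D is a Lie bracket for all t. -/
theorem grunewald_ohalloran_deformation (K V : Type*) [Field K] [CharZero K]
    [AddCommGroup V] [Module K V]
    (μ : V →ₗ[K] V →ₗ[K] V)
    (hμa : ∀ u v : V, μ u v = - μ v u)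
    (hμj : ∀ u v w : V, μ (μ u v) w + μ (μ v w) u + μ (μ w u) v = 0)
    (h : Submodule K V) (x : V) (hx : x ∉ h)
    (c : V →ₗ[K] K) (hcx : c x = 1) (hch : ∀ v ∈ h, c v = 0)
    (hdec : ∀ v : V, v - c v • x ∈ h)
    (hideal : ∀ u : V, ∀ v ∈ h, μ u v ∈ h)
    (D : V →ₗ[K] V) (hDh : ∀ v ∈ h, D v ∈ h)
    (hder : ∀ u ∈ h, ∀ v ∈ h, D (μ u v) = μ (D u) v + μ u (D v))
    (t : K) :
    (∀ u v : V,
      μ u v + t • dixmierCocycle D c x u v = -(μ v u + t • dixmierCocycle D c x v u)) ∧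
    (∀ u v w : V,
      (μ (μ u v + t • dixmierCocycle D c x u v) w
        + t • dixmierCocycle D c x (μ u v + t • dixmierCocycle D c x u v) w) +
      (μ (μ v w + t • dixmierCocycle D c x v w) u
        + t • dixmierCocycle D c x (μ v w + t • dixmierCocycle D c x v w) u) +
      (μ (μ w u + t • dixmierCocycle D c x w u) v
        + t • dixmierCocycle D c x (μ w u + t • dixmierCocycle D c x w u) v) = 0) := by
  -- μ x x = 0
  have hμxx : μ x x = 0 := by
    have h2 : μ x x + μ x x = 0 := by
      nth_rewrite 1 [hμa x x]; abel
    have := (two_smul K (μ x x)) ▸ h2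
    rcases smul_eq_zero.mp this with h' | h'
    · exact absurd h' (by norm_num)
    · exact h'
  -- decomposition of the bracket
  have hμdec : ∀ u v : V, μ u v =
      c u • μ x (v - c v • x) - c v • μ x (u - c u • x)
        + μ (u - c u • x) (v - c v • x) := by
    intro u v
    have hu : u = c u • x + (u - c u • x) := by abel
    have hv : v = c v • x + (v - c v • x) := by abel
    nth_rewrite 1 [hu, hv]
    simp only [map_add, map_smul, LinearMap.add_apply, LinearMap.smul_apply, hμxx,
      smul_zero, hμa (u - c u • x) x]
    module
  -- every bracket lands in h
  have hmem : ∀ u v : V, μ u v ∈ h := by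
    intro u v
    rw [hμdec u v]
    exact Submodule.add_mem _
      (Submodule.sub_mem _
        (Submodule.smul_mem _ _ (hideal x _ (hdec v)))
        (Submodule.smul_mem _ _ (hideal x _ (hdec u))))
      (hideal _ _ (hdec v))
  -- the cocycle lands in h
  have hφmem : ∀ u v : V, dixmierCocycle D c x u v ∈ h := by
    intro u v
    exact Submodule.sub_mem _
      (Submodule.smul_mem _ _ (hDh _ (hdec v)))
      (Submodule.smul_mem _ _ (hDh _ (hdec u)))
  -- value of the cocycle when the first argument is in h
  have hφleft : ∀ m ∈ h, ∀ w : V, dixmierCocycle D c x m w = -(c w • D m) := by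
    intro m hm w
    unfold dixmierCocycle
    rw [hch m hm]
    simp
  -- derivative of the bracket
  have hDμ : ∀ u v : V, D (μ u v) =
      c u • D (μ x (v - c v • x)) - c v • D (μ x (u - c u • x))
        + (μ (D (u - c u • x)) (v - c v • x) + μ (u - c u • x) (D (v - c v • x))) := by
    intro u v
    rw [hμdec u v, map_add, map_sub, map_smul, map_smul, hder _ (hdec u) _ (hdec v)]
  constructor
  · intro u v
    rw [hμa u v]
    unfold dixmierCocycle
    module
  · intro u v w
    -- expansion of each Jacobi summand
    have expand : ∀ u v : V, ∀ w : V,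
        μ (μ u v + t • dixmierCocycle D c x u v) w
          + t • dixmierCocycle D c x (μ u v + t • dixmierCocycle D c x u v) w
        = μ (μ u v) w
          + t • (μ (dixmierCocycle D c x u v) w - c w • D (μ u v))
          + (t * t) • (-(c w • D (dixmierCocycle D c x u v))) := by
      intro u v w
      rw [hφleft _ (Submodule.add_mem _ (hmem u v)
        (Submodule.smul_mem _ _ (hφmem u v))) w]
      simp only [map_add, map_smul, LinearMap.add_apply, LinearMap.smul_apply]
      module
    rw [expand u v w, expand v w u, expand w u v]
    have eh : ∀ a : V, a ∈ h → ∀ e : V, μ a e = -(c e • μ x a) + μ a (e - c e • x) := by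
      intro a ha e
      rw [hμdec a e, hch a ha]
      simp
    have hμφ : ∀ u v w : V, μ (dixmierCocycle D c x u v) w
        = c u • (-(c w • μ x (D (v - c v • x))) + μ (D (v - c v • x)) (w - c w • x))
          - c v • (-(c w • μ x (D (u - c u • x))) + μ (D (u - c u • x)) (w - c w • x)) := by
      intro u v w
      unfold dixmierCocycle
      rw [map_sub μ (c u • D (v - c v • x)) (c v • D (u - c u • x)),
          map_smul μ (c u) (D (v - c v • x)), map_smul μ (c v) (D (u - c u • x)),
          LinearMap.sub_apply, LinearMap.smul_apply, LinearMap.smul_apply,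
          eh _ (hDh _ (hdec v)) w, eh _ (hDh _ (hdec u)) w]
    have hB : (μ (dixmierCocycle D c x u v) w - c w • D (μ u v))
        + (μ (dixmierCocycle D c x v w) u - c u • D (μ v w))
        + (μ (dixmierCocycle D c x w u) v - c v • D (μ w u)) = 0 := by
      rw [hμφ u v w, hμφ v w u, hμφ w u v,
          hDμ u v, hDμ v w, hDμ w u,
          hμa (u - c u • x) (D (v - c v • x)),
          hμa (v - c v • x) (D (w - c w • x)),
          hμa (w - c w • x) (D (u - c u • x))]
      module
    have hC : -(c w • D (dixmierCocycle D c x u v))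
        + -(c u • D (dixmierCocycle D c x v w))
        + -(c v • D (dixmierCocycle D c x w u)) = 0 := by
      unfold dixmierCocycle
      simp only [map_sub, map_smul]
      module
    calc (μ (μ u v) w + t • (μ (dixmierCocycle D c x u v) w - c w • D (μ u v))
          + (t * t) • (-(c w • D (dixmierCocycle D c x u v))))
        + (μ (μ v w) u + t • (μ (dixmierCocycle D c x v w) u - c u • D (μ v w))
          + (t * t) • (-(c u • D (dixmierCocycle D c x v w))))
        + (μ (μ w u) v + t • (μ (dixmierCocycle D c x w u) v - c v • D (μ w u))
          + (t * t) • (-(c v • D (dixmierCocycle D c x w u))))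
        = (μ (μ u v) w + μ (μ v w) u + μ (μ w u) v)
          + t • ((μ (dixmierCocycle D c x u v) w - c w • D (μ u v))
            + (μ (dixmierCocycle D c x v w) u - c u • D (μ v w))
            + (μ (dixmierCocycle D c x w u) v - c v • D (μ w u)))
          + (t * t) • (-(c w • D (dixmierCocycle D c x u v))
            + -(c u • D (dixmierCocycle D c x v w))
            + -(c v • D (dixmierCocycle D c x w u))) := by module
      _ = 0 := by rw [hμj u v w, hB, hC]; simp
end

section
/- Let (g, μ) be a Lie algebra over a field K of characteristic zero, h ⊆ g a subalgebra of codimension 2, and a₁, a₂ ∈ g such that g = span{a₁,a₂} ⊕ h and a₁*∘ad_{a₁} + a₂*∘ad_{a₂} = 0 on h, where a₁*, a₂* are the coordinate functionals relative to this decomposition. Then for any y in the centralizer Z_g(h), the bilinear map μ_t = μ + t·(a₁* ∧ a₂* ⊗ y) is a Lie bracket on g for every t in K. -/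
/-- The bilinear map (a₁* ∧ a₂* ⊗ y)(u,v) = (a₁*(u)a₂*(v) − a₂*(u)a₁*(v)) y,
where c₁ = a₁*, c₂ = a₂*. -/
def wedgeTensor {K V : Type*} [Field K] [AddCommGroup V] [Module K V]
    (c₁ c₂ : V →ₗ[K] K) (y : V) (u v : V) : V :=
  (c₁ u * c₂ v - c₂ u * c₁ v) • y

/-- Main construction: given a subalgebra h of codimension 2, a₁, a₂ with
g = ⟨a₁,a₂⟩ ⊕ h, a₁*∘ad_{a₁} + a₂*∘ad_{a₂} = 0 on h, and y ∈ Z_g(h),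
μ_t = μ + t (a₁* ∧ a₂* ⊗ y) is a Lie bracket for all t. -/
theorem main_linear_deformation (K V : Type*) [Field K] [CharZero K]
    [AddCommGroup V] [Module K V]
    (μ : V →ₗ[K] V →ₗ[K] V)
    (hμa : ∀ u v : V, μ u v = - μ v u)
    (hμj : ∀ u v w : V, μ (μ u v) w + μ (μ v w) u + μ (μ w u) v = 0)
    (h : Submodule K V) (hsub : ∀ u ∈ h, ∀ v ∈ h, μ u v ∈ h)
    (a₁ a₂ : V) (c₁ c₂ : V →ₗ[K] K)
    (h11 : c₁ a₁ = 1) (h12 : c₁ a₂ = 0) (h21 : c₂ a₁ = 0) (h22 : c₂ a₂ = 1)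
    (hc₁h : ∀ w ∈ h, c₁ w = 0) (hc₂h : ∀ w ∈ h, c₂ w = 0)
    (hdec : ∀ v : V, v - c₁ v • a₁ - c₂ v • a₂ ∈ h)
    (htrace : ∀ w ∈ h, c₁ (μ a₁ w) + c₂ (μ a₂ w) = 0)
    (y : V) (hy : ∀ w ∈ h, μ y w = 0)
    (t : K) :
    (∀ u v : V,
      μ u v + t • wedgeTensor c₁ c₂ y u v = -(μ v u + t • wedgeTensor c₁ c₂ y v u)) ∧
    (∀ u v w : V,
      (μ (μ u v + t • wedgeTensor c₁ c₂ y u v) w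
        + t • wedgeTensor c₁ c₂ y (μ u v + t • wedgeTensor c₁ c₂ y u v) w) +
      (μ (μ v w + t • wedgeTensor c₁ c₂ y v w) u
        + t • wedgeTensor c₁ c₂ y (μ v w + t • wedgeTensor c₁ c₂ y v w) u) +
      (μ (μ w u + t • wedgeTensor c₁ c₂ y w u) v
        + t • wedgeTensor c₁ c₂ y (μ w u + t • wedgeTensor c₁ c₂ y w u) v) = 0) := by
    -- μ x x = 0
  have sq : ∀ x : V, μ x x = 0 := by
    intro x
    have h2 : μ x x + μ x x = 0 := by nth_rewrite 2 [hμa x x]; simp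
    have h2' : (2 : K) • μ x x = 0 := by rw [two_smul]; exact h2
    have := smul_eq_zero.mp h2'
    rcases this with h0 | h0
    · exact absurd h0 two_ne_zero
    · exact h0
  -- μ y z decomposition
  have hyw : ∀ z : V, μ y z = c₁ z • μ y a₁ + c₂ z • μ y a₂ := by
    intro z
    have hz := hy _ (hdec z)
    rw [map_sub, map_sub, map_smul, map_smul] at hz
    have h0 : μ y z - (c₁ z • μ y a₁ + c₂ z • μ y a₂) = 0 := by
      linear_combination (norm := module) hz
    exact sub_eq_zero.mp h0
  -- expansion of μ on decomposed vectors
  have expand : ∀ (α β α' β' : K) (x x' : V),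
      μ (α • a₁ + β • a₂ + x) (α' • a₁ + β' • a₂ + x')
      = (α * β' - β * α') • μ a₁ a₂ + α • μ a₁ x' + β • μ a₂ x'
        - α' • μ a₁ x - β' • μ a₂ x + μ x x' := by
    intro α β α' β' x x'
    simp only [map_add, map_smul, LinearMap.add_apply, LinearMap.smul_apply,
      sq a₁, sq a₂, hμa a₂ a₁, hμa x a₁, hμa x a₂, smul_zero, smul_neg]
    module
  -- the key trilinear identity
  have base : ∀ (α β α' β' α'' β'' : K) (x x' x'' : V), x ∈ h → x' ∈ h → x'' ∈ h →
      (c₁ (μ (α • a₁ + β • a₂ + x) (α' • a₁ + β' • a₂ + x'))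
          * c₂ (α'' • a₁ + β'' • a₂ + x'')
        - c₂ (μ (α • a₁ + β • a₂ + x) (α' • a₁ + β' • a₂ + x'))
          * c₁ (α'' • a₁ + β'' • a₂ + x''))
      + (c₁ (μ (α' • a₁ + β' • a₂ + x') (α'' • a₁ + β'' • a₂ + x''))
          * c₂ (α • a₁ + β • a₂ + x)
        - c₂ (μ (α' • a₁ + β' • a₂ + x') (α'' • a₁ + β'' • a₂ + x''))
          * c₁ (α • a₁ + β • a₂ + x))
      + (c₁ (μ (α'' • a₁ + β'' • a₂ + x'') (α • a₁ + β • a₂ + x))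
          * c₂ (α' • a₁ + β' • a₂ + x')
        - c₂ (μ (α'' • a₁ + β'' • a₂ + x'') (α • a₁ + β • a₂ + x))
          * c₁ (α' • a₁ + β' • a₂ + x')) = 0 := by
    intro α β α' β' α'' β'' x x' x'' hx hx' hx''
    rw [expand, expand, expand]
    simp only [map_add, map_sub, map_smul, smul_eq_mul, h11, h12, h21, h22,
      hc₁h x hx, hc₁h x' hx', hc₁h x'' hx'',
      hc₂h x hx, hc₂h x' hx', hc₂h x'' hx'',
      hc₁h _ (hsub x hx x' hx'), hc₂h _ (hsub x hx x' hx'),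
      hc₁h _ (hsub x' hx' x'' hx''), hc₂h _ (hsub x' hx' x'' hx''),
      hc₁h _ (hsub x'' hx'' x hx), hc₂h _ (hsub x'' hx'' x hx)]
    linear_combination (-(α * β' - β * α')) * htrace x'' hx''
      + (-(α' * β'' - β' * α'')) * htrace x hx
      + (-(α'' * β - β'' * α)) * htrace x' hx'
  have key : ∀ u v w : V,
      (c₁ (μ u v) * c₂ w - c₂ (μ u v) * c₁ w)
      + (c₁ (μ v w) * c₂ u - c₂ (μ v w) * c₁ u)
      + (c₁ (μ w u) * c₂ v - c₂ (μ w u) * c₁ v) = 0 := by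
    intro u v w
    have hu : c₁ u • a₁ + c₂ u • a₂ + (u - c₁ u • a₁ - c₂ u • a₂) = u := by module
    have hv : c₁ v • a₁ + c₂ v • a₂ + (v - c₁ v • a₁ - c₂ v • a₂) = v := by module
    have hw : c₁ w • a₁ + c₂ w • a₂ + (w - c₁ w • a₁ - c₂ w • a₂) = w := by module
    have := base (c₁ u) (c₂ u) (c₁ v) (c₂ v) (c₁ w) (c₂ w) _ _ _
      (hdec u) (hdec v) (hdec w)
    rw [hu, hv, hw] at this
    exact this
  constructor
  · intro u v
    rw [hμa u v]
    unfold wedgeTensor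
    match_scalars <;> ring
  · intro u v w
    have h3 : μ (μ w u) v = -(μ (μ u v) w + μ (μ v w) u) := by
      have H := hμj u v w
      linear_combination (norm := module) H
    simp only [wedgeTensor, map_add, map_smul, LinearMap.add_apply,
      LinearMap.smul_apply, smul_eq_mul]
    rw [h3, hyw w, hyw u, hyw v]
    match_scalars <;> first
      | ring1
      | linear_combination t * key u v w
end

section
/- Let (g, μ) be a nilpotent Lie algebra, h ⊆ g a subalgebra of codimension 2, and a₁, a₂ such that g = ⟨a₁,a₂⟩ ⊕ h. Then a₁*∘ad_{a₁}(h) + a₂*∘ad_{a₂}(h) = 0 for all h ∈ h; consequently, for any y in Z_g(h), μ_t = μ + t(a₁* ∧ a₂* ⊗ y) is a Lie bracket for all t. -/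
/-- Left-normed iterated bracket: μ(…μ(μ(x,l₁),l₂)…,l_k). -/
def leftBracket {K V : Type*} [Field K] [AddCommGroup V] [Module K V]
    (μ : V →ₗ[K] V →ₗ[K] V) (x : V) (l : List V) : V :=
  l.foldl (fun a b => μ a b) x

/-!
For `w ∈ h` the map `ad_w = μ · w` is nilpotent and preserves `h`, so the map it induces on the
quotient `V ⧸ h` is nilpotent and has trace zero; in the basis `[a₁], [a₂]` this trace is
`a₁*(μ a₁ w) + a₂*(μ a₂ w)`. Expanding brackets along `V = ⟨a₁, a₂⟩ ⊕ h` shows that this trace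
condition is what makes `a₁* ∧ a₂*` a 2-cocycle. In the Jacobi identity for `μ + t ω`,
`ω = a₁* ∧ a₂* ⊗ y`, the `t`-linear term is then the cocycle condition times `y` plus
`∑_cyc (a₁* ∧ a₂*)(u, v) [y, w]`, and since `y` centralizes `h`, `[y, w]` only depends on
`a₁* w` and `a₂* w`. That sum, like the `t²` term, vanishes because
`∑_cyc (a₁* ∧ a₂*)(u, v) φ(w) = (a₁* ∧ a₂* ∧ φ)(u, v, w)` is zero for `φ` in the span of `a₁*, a₂*`.
-/

section QuotientTrace

variable {R V ι : Type*} [CommRing R] [AddCommGroup V] [Module R V] [Fintype ι] [DecidableEq ι]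
  {h : Submodule R V} {a : ι → V} {c : ι → V →ₗ[R] R}

noncomputable def quotientEquivOfDualPair (hca : ∀ i j, c i (a j) = if i = j then 1 else 0)
    (hch : ∀ i, ∀ w ∈ h, c i w = 0) (hdec : ∀ v, v - ∑ i, c i v • a i ∈ h) :
    (V ⧸ h) ≃ₗ[R] (ι → R) :=
  LinearEquiv.ofBijective (LinearMap.pi fun i => h.liftQ (c i) fun w hw => hch i w hw) <| by
    constructor
    · rw [← LinearMap.ker_eq_bot, LinearMap.ker_eq_bot']
      intro x hx
      obtain ⟨v, rfl⟩ := Submodule.mkQ_surjective h x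
      have hc : ∀ i, c i v = 0 := fun i => congrFun hx i
      simpa [hc] using hdec v
    · intro f
      refine ⟨Submodule.Quotient.mk (∑ j, f j • a j), funext fun i => ?_⟩
      change c i (∑ j, f j • a j) = f i
      simp [hca]

theorem quotientEquivOfDualPair_mk (hca : ∀ i j, c i (a j) = if i = j then 1 else 0)
    (hch : ∀ i, ∀ w ∈ h, c i w = 0) (hdec : ∀ v, v - ∑ i, c i v • a i ∈ h) (v : V) (i : ι) :
    quotientEquivOfDualPair hca hch hdec (Submodule.Quotient.mk v) i = c i v :=
  rfl

theorem trace_mapQ_eq_sum (hca : ∀ i j, c i (a j) = if i = j then 1 else 0)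
    (hch : ∀ i, ∀ w ∈ h, c i w = 0) (hdec : ∀ v, v - ∑ i, c i v • a i ∈ h)
    (f : Module.End R V) (hf : h ≤ h.comap f) :
    LinearMap.trace R (V ⧸ h) (h.mapQ h f hf) = ∑ i, c i (f (a i)) := by
  set e := quotientEquivOfDualPair hca hch hdec
  set b := Module.Basis.ofEquivFun e
  have hb : ∀ i, b i = Submodule.Quotient.mk (a i) := fun i => by
    rw [Module.Basis.coe_ofEquivFun, LinearEquiv.symm_apply_eq]
    ext j
    simp [e, quotientEquivOfDualPair_mk, hca, Pi.single_apply]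
  rw [LinearMap.trace_eq_matrix_trace R b, Matrix.trace]
  refine Finset.sum_congr rfl fun i _ => ?_
  rw [Matrix.diag_apply, LinearMap.toMatrix_apply, hb, Submodule.mapQ_apply,
    Module.Basis.ofEquivFun_repr_apply]
  rfl

theorem sum_apply_eq_zero_of_isNilpotent [IsReduced R]
    (hca : ∀ i j, c i (a j) = if i = j then 1 else 0)
    (hch : ∀ i, ∀ w ∈ h, c i w = 0) (hdec : ∀ v, v - ∑ i, c i v • a i ∈ h)
    {f : Module.End R V} (hf : h ≤ h.comap f) (hnil : IsNilpotent f) :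
    ∑ i, c i (f (a i)) = 0 := by
  obtain ⟨k, hk⟩ := hnil
  have hq : IsNilpotent (h.mapQ h f hf) :=
    ⟨k, by rw [← Submodule.mapQ_pow]; ext; simp [hk]⟩
  rw [← trace_mapQ_eq_sum hca hch hdec f hf]
  exact (LinearMap.isNilpotent_trace_of_isNilpotent hq).eq_zero

end QuotientTrace

theorem leftBracket_replicate {K V : Type*} [Field K] [AddCommGroup V] [Module K V]
    (μ : V →ₗ[K] V →ₗ[K] V) (w : V) (n : ℕ) (x : V) :
    leftBracket μ x (List.replicate n w) = (μ.flip w ^ n) x := by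
  induction n generalizing x with
  | zero => rfl
  | succ n ih =>
    rw [List.replicate_succ, pow_succ, Module.End.mul_apply, ← ih]
    rfl

theorem isNilpotent_flip_of_leftBracket {K V : Type*} [Field K] [AddCommGroup V] [Module K V]
    {μ : V →ₗ[K] V →ₗ[K] V}
    (hnil : ∃ k : ℕ, ∀ (x : V) (l : List V), l.length = k → leftBracket μ x l = 0) (w : V) :
    IsNilpotent (μ.flip w) := by
  obtain ⟨k, hk⟩ := hnil
  refine ⟨k, LinearMap.ext fun x => ?_⟩
  rw [← leftBracket_replicate, hk x _ List.length_replicate, LinearMap.zero_apply]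

theorem isAlt_of_antisymm {K V : Type*} [Field K] [NeZero (2 : K)] [AddCommGroup V]
    [Module K V] {μ : V →ₗ[K] V →ₗ[K] V} (hμa : ∀ u v : V, μ u v = - μ v u) : μ.IsAlt := by
  intro x
  have h2 : (2 : K) • μ x x = 0 := by
    rw [two_smul]
    nth_rewrite 2 [hμa x x]
    exact add_neg_cancel _
  exact (smul_eq_zero.mp h2).resolve_left two_ne_zero

section Deformation

variable {K V : Type*} [Field K] [AddCommGroup V] [Module K V] {μ : V →ₗ[K] V →ₗ[K] V}
  {h : Submodule K V} {a₁ a₂ : V} {c₁ c₂ : V →ₗ[K] K}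

theorem coord_bracket_add_coord_bracket_eq_zero
    (hnil : ∃ k : ℕ, ∀ (x : V) (l : List V), l.length = k → leftBracket μ x l = 0)
    (hsub : ∀ u ∈ h, ∀ v ∈ h, μ u v ∈ h)
    (h11 : c₁ a₁ = 1) (h12 : c₁ a₂ = 0) (h21 : c₂ a₁ = 0) (h22 : c₂ a₂ = 1)
    (hc₁h : ∀ w ∈ h, c₁ w = 0) (hc₂h : ∀ w ∈ h, c₂ w = 0)
    (hdec : ∀ v : V, v - c₁ v • a₁ - c₂ v • a₂ ∈ h) {w : V} (hw : w ∈ h) :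
    c₁ (μ a₁ w) + c₂ (μ a₂ w) = 0 := by
  have key := sum_apply_eq_zero_of_isNilpotent (h := h) (a := ![a₁, a₂]) (c := ![c₁, c₂])
    (by simp [Fin.forall_fin_two, h11, h12, h21, h22])
    (by simpa [Fin.forall_fin_two] using ⟨hc₁h, hc₂h⟩)
    (fun v => by simpa [Fin.sum_univ_two, sub_sub] using hdec v)
    (f := μ.flip w) (fun v hv => hsub v hv w hw) (isNilpotent_flip_of_leftBracket hnil w)
  simpa [Fin.sum_univ_two] using key

def wedgeForm (c₁ c₂ : V →ₗ[K] K) (u v : V) : K :=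
  c₁ u * c₂ v - c₂ u * c₁ v

theorem apply_bracket_eq (hμ : μ.IsAlt) (hsub : ∀ u ∈ h, ∀ v ∈ h, μ u v ∈ h)
    (hdec : ∀ v : V, v - c₁ v • a₁ - c₂ v • a₂ ∈ h)
    {c : V →ₗ[K] K} (hc : ∀ w ∈ h, c w = 0) (p q : V) :
    c (μ p q) = wedgeForm c₁ c₂ p q * c (μ a₁ a₂)
      + c₁ p * c (μ a₁ (q - c₁ q • a₁ - c₂ q • a₂))
      + c₂ p * c (μ a₂ (q - c₁ q • a₁ - c₂ q • a₂))
      - c₁ q * c (μ a₁ (p - c₁ p • a₁ - c₂ p • a₂))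
      - c₂ q * c (μ a₂ (p - c₁ p • a₁ - c₂ p • a₂)) := by
  set p' := p - c₁ p • a₁ - c₂ p • a₂
  set q' := q - c₁ q • a₁ - c₂ q • a₂
  have hp : p = c₁ p • a₁ + c₂ p • a₂ + p' := by simp only [p']; abel
  have hq : q = c₁ q • a₁ + c₂ q • a₂ + q' := by simp only [q']; abel
  have hpq : c (μ p' q') = 0 := hc _ (hsub _ (hdec p) _ (hdec q))
  clear_value p' q'
  conv_lhs => rw [hp, hq]
  simp only [map_add, map_smul, LinearMap.add_apply, LinearMap.smul_apply, smul_eq_mul]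
  rw [hμ a₁, hμ a₂, ← hμ.neg a₁ a₂, ← hμ.neg a₁ p', ← hμ.neg a₂ p', hpq]
  simp only [map_neg, map_zero, wedgeForm]
  ring

theorem wedgeForm_cocycle (hμ : μ.IsAlt) (hsub : ∀ u ∈ h, ∀ v ∈ h, μ u v ∈ h)
    (hc₁h : ∀ w ∈ h, c₁ w = 0) (hc₂h : ∀ w ∈ h, c₂ w = 0)
    (hdec : ∀ v : V, v - c₁ v • a₁ - c₂ v • a₂ ∈ h)
    (htr : ∀ w ∈ h, c₁ (μ a₁ w) + c₂ (μ a₂ w) = 0) (u v w : V) :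
    wedgeForm c₁ c₂ (μ u v) w + wedgeForm c₁ c₂ (μ v w) u + wedgeForm c₁ c₂ (μ w u) v = 0 := by
  have e₁ := apply_bracket_eq hμ hsub hdec hc₁h
  have e₂ := apply_bracket_eq hμ hsub hdec hc₂h
  simp only [wedgeForm] at e₁ e₂ ⊢
  rw [e₁ u v, e₁ v w, e₁ w u, e₂ u v, e₂ v w, e₂ w u]
  linear_combination (c₂ v * c₁ w - c₁ v * c₂ w) * htr _ (hdec u)
    + (c₂ w * c₁ u - c₁ w * c₂ u) * htr _ (hdec v)
    + (c₂ u * c₁ v - c₁ u * c₂ v) * htr _ (hdec w)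

theorem bracket_eq_of_centralizes (hdec : ∀ v : V, v - c₁ v • a₁ - c₂ v • a₂ ∈ h)
    {y : V} (hy : ∀ w ∈ h, μ y w = 0) (x : V) :
    μ y x = c₁ x • μ y a₁ + c₂ x • μ y a₂ := by
  have hx : x = c₁ x • a₁ + c₂ x • a₂ + (x - c₁ x • a₁ - c₂ x • a₂) := by abel
  conv_lhs => rw [hx]
  rw [map_add, map_add, map_smul, map_smul, hy _ (hdec x), add_zero]

theorem jacobi_add_smul_wedgeTensor
    (hμj : ∀ u v w : V, μ (μ u v) w + μ (μ v w) u + μ (μ w u) v = 0)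
    (hdec : ∀ v : V, v - c₁ v • a₁ - c₂ v • a₂ ∈ h)
    (hcoc : ∀ u v w : V,
      wedgeForm c₁ c₂ (μ u v) w + wedgeForm c₁ c₂ (μ v w) u + wedgeForm c₁ c₂ (μ w u) v = 0)
    {y : V} (hy : ∀ w ∈ h, μ y w = 0) (t : K) (u v w : V) :
    (μ (μ u v + t • wedgeTensor c₁ c₂ y u v) w
      + t • wedgeTensor c₁ c₂ y (μ u v + t • wedgeTensor c₁ c₂ y u v) w) +
    (μ (μ v w + t • wedgeTensor c₁ c₂ y v w) u
      + t • wedgeTensor c₁ c₂ y (μ v w + t • wedgeTensor c₁ c₂ y v w) u) +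
    (μ (μ w u + t • wedgeTensor c₁ c₂ y w u) v
      + t • wedgeTensor c₁ c₂ y (μ w u + t • wedgeTensor c₁ c₂ y w u) v) = 0 := by
  have hcocy : (wedgeForm c₁ c₂ (μ u v) w + wedgeForm c₁ c₂ (μ v w) u
      + wedgeForm c₁ c₂ (μ w u) v) • y = 0 := by rw [hcoc, zero_smul]
  simp only [wedgeTensor, wedgeForm, map_add, map_smul, LinearMap.add_apply, LinearMap.smul_apply,
    smul_eq_mul] at hcocy ⊢
  rw [bracket_eq_of_centralizes hdec hy u, bracket_eq_of_centralizes hdec hy v,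
    bracket_eq_of_centralizes hdec hy w]
  linear_combination (norm := module) hμj u v w + t • hcocy

end Deformation

theorem nilpotent_main_deformation_general (K V : Type*) [Field K] [CharZero K]
    [AddCommGroup V] [Module K V]
    (μ : V →ₗ[K] V →ₗ[K] V)
    (hμa : ∀ u v : V, μ u v = - μ v u)
    (hμj : ∀ u v w : V, μ (μ u v) w + μ (μ v w) u + μ (μ w u) v = 0)
    (hnil : ∃ k : ℕ, ∀ (x : V) (l : List V), l.length = k → leftBracket μ x l = 0)
    (h : Submodule K V) (hsub : ∀ u ∈ h, ∀ v ∈ h, μ u v ∈ h)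
    (a₁ a₂ : V) (c₁ c₂ : V →ₗ[K] K)
    (h11 : c₁ a₁ = 1) (h12 : c₁ a₂ = 0) (h21 : c₂ a₁ = 0) (h22 : c₂ a₂ = 1)
    (hc₁h : ∀ w ∈ h, c₁ w = 0) (hc₂h : ∀ w ∈ h, c₂ w = 0)
    (hdec : ∀ v : V, v - c₁ v • a₁ - c₂ v • a₂ ∈ h) :
    (∀ w ∈ h, c₁ (μ a₁ w) + c₂ (μ a₂ w) = 0) ∧
    (∀ y : V, (∀ w ∈ h, μ y w = 0) → ∀ t : K,
      (∀ u v : V,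
        μ u v + t • wedgeTensor c₁ c₂ y u v = -(μ v u + t • wedgeTensor c₁ c₂ y v u)) ∧
      (∀ u v w : V,
        (μ (μ u v + t • wedgeTensor c₁ c₂ y u v) w
          + t • wedgeTensor c₁ c₂ y (μ u v + t • wedgeTensor c₁ c₂ y u v) w) +
        (μ (μ v w + t • wedgeTensor c₁ c₂ y v w) u
          + t • wedgeTensor c₁ c₂ y (μ v w + t • wedgeTensor c₁ c₂ y v w) u) +
        (μ (μ w u + t • wedgeTensor c₁ c₂ y w u) v
          + t • wedgeTensor c₁ c₂ y (μ w u + t • wedgeTensor c₁ c₂ y w u) v) = 0)) := by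
  have htr : ∀ w ∈ h, c₁ (μ a₁ w) + c₂ (μ a₂ w) = 0 := fun w hw =>
    coord_bracket_add_coord_bracket_eq_zero hnil hsub h11 h12 h21 h22 hc₁h hc₂h hdec hw
  have hcoc := wedgeForm_cocycle (isAlt_of_antisymm hμa) hsub hc₁h hc₂h hdec htr
  refine ⟨htr, fun y hy t => ⟨fun u v => ?_, jacobi_add_smul_wedgeTensor hμj hdec hcoc hy t⟩⟩
  simp only [wedgeTensor]
  rw [hμa u v]
  module

/-- For a nilpotent Lie algebra and a codimension-2 subalgebra h with
g = ⟨a₁,a₂⟩ ⊕ h, one has a₁*∘ad_{a₁} + a₂*∘ad_{a₂} = 0 on h; consequently for any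
y ∈ Z_g(h), μ_t = μ + t(a₁* ∧ a₂* ⊗ y) is a Lie bracket for all t. -/
theorem nilpotent_main_deformation (K V : Type*) [Field K] [CharZero K]
    [AddCommGroup V] [Module K V] [FiniteDimensional K V]
    (μ : V →ₗ[K] V →ₗ[K] V)
    (hμa : ∀ u v : V, μ u v = - μ v u)
    (hμj : ∀ u v w : V, μ (μ u v) w + μ (μ v w) u + μ (μ w u) v = 0)
    (hnil : ∃ k : ℕ, ∀ (x : V) (l : List V), l.length = k → leftBracket μ x l = 0)
    (h : Submodule K V) (hsub : ∀ u ∈ h, ∀ v ∈ h, μ u v ∈ h)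
    (a₁ a₂ : V) (c₁ c₂ : V →ₗ[K] K)
    (h11 : c₁ a₁ = 1) (h12 : c₁ a₂ = 0) (h21 : c₂ a₁ = 0) (h22 : c₂ a₂ = 1)
    (hc₁h : ∀ w ∈ h, c₁ w = 0) (hc₂h : ∀ w ∈ h, c₂ w = 0)
    (hdec : ∀ v : V, v - c₁ v • a₁ - c₂ v • a₂ ∈ h) :
    (∀ w ∈ h, c₁ (μ a₁ w) + c₂ (μ a₂ w) = 0) ∧
    (∀ y : V, (∀ w ∈ h, μ y w = 0) → ∀ t : K,
      (∀ u v : V,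
        μ u v + t • wedgeTensor c₁ c₂ y u v = -(μ v u + t • wedgeTensor c₁ c₂ y v u)) ∧
      (∀ u v w : V,
        (μ (μ u v + t • wedgeTensor c₁ c₂ y u v) w
          + t • wedgeTensor c₁ c₂ y (μ u v + t • wedgeTensor c₁ c₂ y u v) w) +
        (μ (μ v w + t • wedgeTensor c₁ c₂ y v w) u
          + t • wedgeTensor c₁ c₂ y (μ v w + t • wedgeTensor c₁ c₂ y v w) u) +
        (μ (μ w u + t • wedgeTensor c₁ c₂ y w u) v
          + t • wedgeTensor c₁ c₂ y (μ w u + t • wedgeTensor c₁ c₂ y w u) v) = 0)) :=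
  nilpotent_main_deformation_general K V μ hμa hμj hnil h hsub a₁ a₂ c₁ c₂ h11 h12 h21 h22 hc₁h hc₂h
    hdec
end

section
/- Let h_m be the (2m+1)-dimensional Heisenberg Lie algebra with m > 1, with basis x₁,y₁,…,x_m,y_m,z and brackets [x_i,y_i] = z. Then the bilinear map μ_t = μ + t(x₁* ∧ x₂* ⊗ y₁) is a Lie bracket for all t, and for t ≠ 0 it is 3-step nilpotent (hence not isomorphic to h_m). -/
/-!
The Heisenberg bracket takes values in the centre `K z`, on which `x₁*` and `x₂*` vanish, as they
do on `y₁`; so the deformation term never feeds into itself and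
`μ_t (μ_t u v) w = t (x₁* ∧ x₂*)(u, v) μ y₁ w = -t (x₁* ∧ x₂*)(u, v) x₁*(w) z`.
The cyclic sum of the right-hand side is `-t (x₁* ∧ x₂* ∧ x₁*)(u, v, w) z = 0`, which is the
Jacobi identity; every double bracket lies in `K z`, which `μ_t` annihilates, so `μ_t³ = 0`; and
`μ_t (μ_t x₁ x₂) x₁ = -t z ≠ 0`.
-/

open Module Sum

section Deformation

variable {K V : Type*} [CommRing K] [AddCommGroup V] [Module K V]
  (μ : V →ₗ[K] V →ₗ[K] V) (c₁ c₂ : V →ₗ[K] K) (y : V) (t : K)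

/-- `μ + t (c₁ ∧ c₂ ⊗ y)`. -/
def wedgeDeformation : V → V → V :=
  fun u v => μ u v + t • ((c₁ u * c₂ v - c₂ u * c₁ v) • y)

variable {μ c₁ c₂ y}

local notation "μₜ" => wedgeDeformation μ c₁ c₂ y t

theorem wedgeDeformation_antisymm (hμ : ∀ u v, μ u v = -μ v u) (u v : V) :
    μₜ u v = -μₜ v u := by
  simp only [wedgeDeformation]
  rw [hμ u v]
  module

theorem wedgeDeformation_of_coord_eq_zero {v : V} (h₁ : c₁ v = 0) (h₂ : c₂ v = 0) (w : V) :
    μₜ v w = μ v w := by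
  simp [wedgeDeformation, h₁, h₂]

theorem coord_wedgeDeformation_eq_zero {c : V →ₗ[K] K} (hμ : ∀ u v, c (μ u v) = 0) (hy : c y = 0)
    (u v : V) : c (μₜ u v) = 0 := by
  simp [wedgeDeformation, hμ, hy]

theorem wedgeDeformation_wedgeDeformation (hμ₁ : ∀ u v, c₁ (μ u v) = 0)
    (hμ₂ : ∀ u v, c₂ (μ u v) = 0) (hy₁ : c₁ y = 0) (hy₂ : c₂ y = 0) (u v w : V) :
    μₜ (μₜ u v) w = μ (μ u v) w + (t * (c₁ u * c₂ v - c₂ u * c₁ v)) • μ y w := by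
  rw [wedgeDeformation_of_coord_eq_zero t (coord_wedgeDeformation_eq_zero t hμ₁ hy₁ u v)
    (coord_wedgeDeformation_eq_zero t hμ₂ hy₂ u v)]
  simp [wedgeDeformation, smul_smul]

theorem wedgeDeformation_jacobi (hμ : ∀ u v w, μ (μ u v) w + μ (μ v w) u + μ (μ w u) v = 0)
    (hμ₁ : ∀ u v, c₁ (μ u v) = 0) (hμ₂ : ∀ u v, c₂ (μ u v) = 0) (hy₁ : c₁ y = 0) (hy₂ : c₂ y = 0)
    {z : V} (hy : ∀ w, μ y w = c₁ w • z) (u v w : V) :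
    μₜ (μₜ u v) w + μₜ (μₜ v w) u + μₜ (μₜ w u) v = 0 := by
  simp only [wedgeDeformation_wedgeDeformation t hμ₁ hμ₂ hy₁ hy₂, hy]
  linear_combination (norm := module) hμ u v w

end Deformation

/-- `b` is a basis `x_i = b (inl i)`, `y_i = b (inr (inl i))`, `z = b (inr (inr ()))` of `V` in
which `μ` has the brackets of the Heisenberg Lie algebra. -/
structure IsHeisenbergBracket {K V ι : Type*} [CommRing K] [AddCommGroup V] [Module K V]
    (b : Basis (ι ⊕ (ι ⊕ Unit)) K V) (μ : V →ₗ[K] V →ₗ[K] V) : Prop where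
  antisymm : ∀ u v, μ u v = -μ v u
  x_y_self : ∀ i, μ (b (inl i)) (b (inr (inl i))) = b (inr (inr ()))
  x_y_of_ne : ∀ i j, i ≠ j → μ (b (inl i)) (b (inr (inl j))) = 0
  x_x : ∀ i j, μ (b (inl i)) (b (inl j)) = 0
  y_y : ∀ i j, μ (b (inr (inl i))) (b (inr (inl j))) = 0
  z_left : ∀ v, μ (b (inr (inr ()))) v = 0

namespace IsHeisenbergBracket

variable {K V ι : Type*} [CommRing K] [AddCommGroup V] [Module K V]
  {b : Basis (ι ⊕ (ι ⊕ Unit)) K V} {μ : V →ₗ[K] V →ₗ[K] V}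

theorem x_y_mem_span_center (h : IsHeisenbergBracket b μ) (i j : ι) :
    μ (b (inl i)) (b (inr (inl j))) ∈ K ∙ b (inr (inr ())) := by
  obtain rfl | hij := eq_or_ne i j
  · exact h.x_y_self i ▸ Submodule.mem_span_singleton_self _
  · exact h.x_y_of_ne i j hij ▸ Submodule.zero_mem _

theorem basis_mem_span_center (h : IsHeisenbergBracket b μ) (k l : ι ⊕ (ι ⊕ Unit)) :
    μ (b k) (b l) ∈ K ∙ b (inr (inr ())) := by
  rcases k with i | i | ⟨⟩ <;> rcases l with j | j | ⟨⟩
  · simp [h.x_x]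
  · exact h.x_y_mem_span_center i j
  · simp [h.antisymm _ (b (inr (inr ()))), h.z_left]
  · exact h.antisymm _ _ ▸ Submodule.neg_mem _ (h.x_y_mem_span_center j i)
  · simp [h.y_y]
  · simp [h.antisymm _ (b (inr (inr ()))), h.z_left]
  all_goals simp [h.z_left]

theorem mem_span_center (h : IsHeisenbergBracket b μ) (u v : V) :
    μ u v ∈ K ∙ b (inr (inr ())) := by
  have : μ.compr₂ (K ∙ b (inr (inr ()))).mkQ = 0 :=
    b.ext fun k => b.ext fun l => by simpa using h.basis_mem_span_center k l
  simpa using LinearMap.congr_fun₂ this u v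

theorem apply_eq_zero_of_mem_span_center (h : IsHeisenbergBracket b μ) {u : V}
    (hu : u ∈ K ∙ b (inr (inr ()))) (w : V) : μ u w = 0 := by
  obtain ⟨a, rfl⟩ := Submodule.mem_span_singleton.mp hu
  simp [h.z_left]

theorem coord_apply_eq_zero (h : IsHeisenbergBracket b μ) {k : ι ⊕ (ι ⊕ Unit)}
    (hk : k ≠ inr (inr ())) (u v : V) : b.coord k (μ u v) = 0 := by
  obtain ⟨a, ha⟩ := Submodule.mem_span_singleton.mp (h.mem_span_center u v)
  simp [← ha, hk.symm]

theorem apply_y (h : IsHeisenbergBracket b μ) (i : ι) (w : V) :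
    μ w (b (inr (inl i))) = b.coord (inl i) w • b (inr (inr ())) := by
  have : μ.flip (b (inr (inl i))) = (b.coord (inl i)).smulRight (b (inr (inr ()))) := by
    refine b.ext fun k => ?_
    rcases k with j | j | ⟨⟩
    · obtain rfl | hji := eq_or_ne j i
      · simp [h.x_y_self]
      · simp [h.x_y_of_ne j i hji, hji.symm]
    · simp [h.y_y]
    · simp [h.z_left]
  exact LinearMap.congr_fun this w

theorem apply_apply_eq_zero (h : IsHeisenbergBracket b μ) (u v w : V) : μ (μ u v) w = 0 :=
  h.apply_eq_zero_of_mem_span_center (h.mem_span_center u v) w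

variable (i j : ι) (t : K)

local notation "μₜ" => wedgeDeformation μ (b.coord (inl i)) (b.coord (inl j)) (b (inr (inl i))) t

theorem deformation_deformation (h : IsHeisenbergBracket b μ) (u v w : V) :
    μₜ (μₜ u v) w = (t * (b.coord (inl i) u * b.coord (inl j) v -
      b.coord (inl j) u * b.coord (inl i) v)) • μ (b (inr (inl i))) w := by
  rw [wedgeDeformation_wedgeDeformation t (h.coord_apply_eq_zero inl_ne_inr)
    (h.coord_apply_eq_zero inl_ne_inr) (by simp) (by simp), h.apply_apply_eq_zero, zero_add]

theorem deformation_jacobi (h : IsHeisenbergBracket b μ) (u v w : V) :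
    μₜ (μₜ u v) w + μₜ (μₜ v w) u + μₜ (μₜ w u) v = 0 :=
  wedgeDeformation_jacobi t (fun u v w => by simp [h.apply_apply_eq_zero])
    (h.coord_apply_eq_zero inl_ne_inr) (h.coord_apply_eq_zero inl_ne_inr) (by simp) (by simp)
    (fun w => by rw [h.antisymm, h.apply_y, ← smul_neg]) u v w

theorem deformation_deformation_mem_span_center
    (h : IsHeisenbergBracket b μ) (u v w : V) : μₜ (μₜ u v) w ∈ K ∙ b (inr (inr ())) := by
  rw [h.deformation_deformation]
  exact Submodule.smul_mem _ _ (h.mem_span_center _ _)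

theorem deformation_deformation_deformation_eq_zero (h : IsHeisenbergBracket b μ) (u v w x : V) :
    μₜ (μₜ (μₜ u v) w) x = 0 := by
  obtain ⟨a, ha⟩ := Submodule.mem_span_singleton.mp
    (h.deformation_deformation_mem_span_center i j t u v w)
  rw [← ha, wedgeDeformation_of_coord_eq_zero t (by simp) (by simp)]
  simp [h.z_left]

variable {i j t}

theorem deformation_x_x_x_ne_zero (h : IsHeisenbergBracket b μ) (hij : i ≠ j)
    (ht : t ≠ 0) : μₜ (μₜ (b (inl i)) (b (inl j))) (b (inl i)) ≠ 0 := by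
  intro hW
  apply ht
  simpa [h.deformation_deformation, h.antisymm _ (b (inl i)), h.x_y_self, hij, hij.symm] using
    congrArg (b.coord (inr (inr ()))) hW

end IsHeisenbergBracket

/-- For the (2m+1)-dimensional Heisenberg Lie algebra h_m with m > 1 (basis
x_i = inl i, y_i = inr (inl i), z = inr (inr ())), the map
μ_t = μ + t(x₁* ∧ x₂* ⊗ y₁) is a Lie bracket for all t, and for t ≠ 0 it is
3-step nilpotent. -/
theorem heisenberg_three_step_deformation (K V : Type*) [Field K]
    [AddCommGroup V] [Module K V]
    (m : ℕ) (hm : 1 < m)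
    (b : Module.Basis (Fin m ⊕ (Fin m ⊕ Unit)) K V)
    (μ : V →ₗ[K] V →ₗ[K] V)
    (hμa : ∀ u v : V, μ u v = - μ v u)
    (hxy : ∀ i : Fin m, μ (b (Sum.inl i)) (b (Sum.inr (Sum.inl i))) = b (Sum.inr (Sum.inr ())))
    (hxy' : ∀ i j : Fin m, i ≠ j → μ (b (Sum.inl i)) (b (Sum.inr (Sum.inl j))) = 0)
    (hxx : ∀ i j : Fin m, μ (b (Sum.inl i)) (b (Sum.inl j)) = 0)
    (hyy : ∀ i j : Fin m, μ (b (Sum.inr (Sum.inl i))) (b (Sum.inr (Sum.inl j))) = 0)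
    (hz : ∀ v : V, μ (b (Sum.inr (Sum.inr ()))) v = 0)
    (t : K) :
    letI c₁ : V →ₗ[K] K := b.coord (Sum.inl ⟨0, by omega⟩)
    letI c₂ : V →ₗ[K] K := b.coord (Sum.inl ⟨1, by omega⟩)
    letI y₁ : V := b (Sum.inr (Sum.inl ⟨0, by omega⟩))
    letI μt : V → V → V := fun u v => μ u v + t • ((c₁ u * c₂ v - c₂ u * c₁ v) • y₁)
    (∀ u v : V, μt u v = - μt v u) ∧
    (∀ u v w : V, μt (μt u v) w + μt (μt v w) u + μt (μt w u) v = 0) ∧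
    (t ≠ 0 →
      (∀ x₁ x₂ x₃ x₄ : V, μt (μt (μt x₁ x₂) x₃) x₄ = 0) ∧
      (∃ u v w : V, μt (μt u v) w ≠ 0)) := by
  have h : IsHeisenbergBracket b μ := ⟨hμa, hxy, hxy', hxx, hyy, hz⟩
  have h01 : (⟨0, by omega⟩ : Fin m) ≠ ⟨1, by omega⟩ := by simp
  exact ⟨wedgeDeformation_antisymm t hμa, h.deformation_jacobi _ _ t,
    fun ht => ⟨h.deformation_deformation_deformation_eq_zero _ _ t, _, _, _,
      h.deformation_x_x_x_ne_zero h01 ht⟩⟩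
end

section
/- Let μ be the bracket of the (2m+1)-dimensional Heisenberg Lie algebra h_m and let σ be an antisymmetric bilinear map h_m × h_m → h_m satisfying the 2-cocycle condition ∮(μ∘σ + σ∘μ) = 0 and the nil-condition μ∘σ + σ∘μ = 0 as trilinear maps (i.e., σ ∈ Z²_{2-nil}(μ,μ)). Then there exists a linear map f : h_m → h_m such that σ(x,y) = μ(f(x),y) + μ(x,f(y)) − f(μ(x,y)) for all x, y. In particular H²_{2-nil}(μ,μ) = 0. -/
/-!
Write the bracket as `[u,v] = ω(u,v) z` with `z` central. The nil-condition
`[σ(u,v),w] = -σ([u,v],w) = -ω(u,v) σ(z,w)` determines `ω(σ(u,v),·)`, and since the radical of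
`ω` is `K z` this gives `σ(u,v) = R(u,v) z - ω(u,v) a` with `R = c ∘ σ` and `a = ♯R(z,·)`, where
`♯` inverts `ω` on a symplectic complement of `z`. Such a map is `δf` for
`f x = ½ ♯R(x + c(x) z)`: indeed `f z = a` and `ω(f x, y) + ω(x, f y) = R(x, y)`.
-/

section

open Module

variable {K V : Type*} [Field K] [AddCommGroup V] [Module K V]

/-- `ω = c ∘ μ` is the form with `μ u v = ω u v • z`, and `sharp` is an inverse of `u ↦ ω u`
up to the line `K z`. -/
structure IsHeisenbergBracket_s13 (μ : V →ₗ[K] V →ₗ[K] V) (z : V) (c : Dual K V)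
    (sharp : Dual K V →ₗ[K] V) : Prop where
  antisymm : ∀ u v, μ u v = -μ v u
  eq_coord_smul : ∀ u v, μ u v = c (μ u v) • z
  coord_self : c z = 1
  sharp_add_coord_smul : ∀ s, sharp (c ∘ₗ μ s) + c s • z = s
  coord_sharp : ∀ φ w, c (μ (sharp φ) w) = φ w - c w * φ z

namespace IsHeisenbergBracket_s13

variable {μ σ : V →ₗ[K] V →ₗ[K] V} {z : V} {c : Dual K V} {sharp : Dual K V →ₗ[K] V}

def primitive (z : V) (c : Dual K V) (sharp : Dual K V →ₗ[K] V) (R : V →ₗ[K] V →ₗ[K] K) :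
    V →ₗ[K] V :=
  (2⁻¹ : K) • sharp ∘ₗ R ∘ₗ (LinearMap.id + c.smulRight z)

variable (hμ : IsHeisenbergBracket_s13 μ z c sharp)
include hμ

theorem coord_antisymm (u v : V) : c (μ u v) = -c (μ v u) := by
  rw [hμ.antisymm, map_neg]

theorem eq_of_nil (hσ : ∀ x y w, μ (σ x y) w + σ (μ x y) w = 0) (u v : V) :
    σ u v = c (σ u v) • z - c (μ u v) • sharp (c ∘ₗ σ z) := by
  have hform : c ∘ₗ μ (σ u v) = -c (μ u v) • (c ∘ₗ σ z) := by
    ext w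
    have hσw : μ (σ u v) w = -σ (μ u v) w := eq_neg_of_add_eq_zero_left (hσ u v w)
    rw [LinearMap.comp_apply, hσw, hμ.eq_coord_smul u v]
    simp [hμ.coord_self]
  calc σ u v = sharp (c ∘ₗ μ (σ u v)) + c (σ u v) • z := (hμ.sharp_add_coord_smul _).symm
    _ = _ := by rw [hform, map_smul]; module

theorem apply_primitive_add [NeZero (2 : K)] {R : V →ₗ[K] V →ₗ[K] K}
    (hR : ∀ u v, R u v = -R v u) (x y : V) :
    μ (primitive z c sharp R x) y + μ x (primitive z c sharp R y) = R x y • z := by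
  have hcoord (x y : V) : c (μ (primitive z c sharp R x) y)
      = 2⁻¹ * (R x y + c x * R z y - c y * R x z - c x * c y * R z z) := by
    simp only [primitive, LinearMap.smul_apply, LinearMap.comp_apply, LinearMap.add_apply,
      LinearMap.id_apply, LinearMap.smulRight_apply, map_smul, map_add, hμ.coord_sharp,
      smul_eq_mul]
    ring
  have hzz : R z z = 0 := by
    have h2 : (2 : K) * R z z = 0 := by linear_combination hR z z
    exact (mul_eq_zero.mp h2).resolve_left two_ne_zero
  rw [hμ.eq_coord_smul (primitive z c sharp R x) y, hμ.eq_coord_smul x, hμ.coord_antisymm x,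
    hcoord, hcoord, hR y x, hR z x, hR y z, hzz, ← add_smul]
  congr 1
  field_simp
  ring

theorem primitive_self [NeZero (2 : K)] (R : V →ₗ[K] V →ₗ[K] K) :
    primitive z c sharp R z = sharp (R z) := by
  rw [primitive, LinearMap.smul_apply, LinearMap.comp_apply, LinearMap.comp_apply,
    LinearMap.add_apply, LinearMap.id_apply, LinearMap.smulRight_apply, hμ.coord_self, one_smul,
    ← two_smul K z, map_smul, map_smul, smul_smul, inv_mul_cancel₀ two_ne_zero, one_smul]

theorem exists_coboundary_eq_of_nil [NeZero (2 : K)] (hσa : ∀ u v, σ u v = -σ v u)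
    (hσ : ∀ x y w, μ (σ x y) w + σ (μ x y) w = 0) :
    ∃ f : V →ₗ[K] V, ∀ x y, σ x y = μ (f x) y + μ x (f y) - f (μ x y) := by
  have hR (u v : V) : c (σ u v) = -c (σ v u) := by rw [hσa, map_neg]
  refine ⟨primitive z c sharp (σ.compr₂ c), fun x y => ?_⟩
  rw [hμ.apply_primitive_add (R := σ.compr₂ c) hR, hμ.eq_coord_smul x y, map_smul,
    hμ.primitive_self, hμ.eq_of_nil hσ x y]
  rfl

end IsHeisenbergBracket_s13

namespace Module.Basis

open Sum

variable {m : ℕ}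

structure IsHeisenberg (b : Basis (Fin m ⊕ (Fin m ⊕ Unit)) K V) (μ : V →ₗ[K] V →ₗ[K] V) :
    Prop where
  antisymm : ∀ u v, μ u v = -μ v u
  x_y : ∀ i, μ (b (inl i)) (b (inr (inl i))) = b (inr (inr ()))
  x_y_of_ne : ∀ i j, i ≠ j → μ (b (inl i)) (b (inr (inl j))) = 0
  x_x : ∀ i j, μ (b (inl i)) (b (inl j)) = 0
  y_y : ∀ i j, μ (b (inr (inl i))) (b (inr (inl j))) = 0
  z_left : ∀ v, μ (b (inr (inr ()))) v = 0

noncomputable def heisenbergSharp (b : Basis (Fin m ⊕ (Fin m ⊕ Unit)) K V) : Dual K V →ₗ[K] V :=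
  ∑ p, ((Dual.eval K V (b (inr (inl p)))).smulRight (b (inl p))
    - (Dual.eval K V (b (inl p))).smulRight (b (inr (inl p))))

variable {b : Basis (Fin m ⊕ (Fin m ⊕ Unit)) K V}

@[simp]
theorem heisenbergSharp_apply (φ : Dual K V) :
    b.heisenbergSharp φ
      = ∑ p, (φ (b (inr (inl p))) • b (inl p) - φ (b (inl p)) • b (inr (inl p))) := by
  simp [heisenbergSharp]

namespace IsHeisenberg

variable {μ : V →ₗ[K] V →ₗ[K] V} (hb : b.IsHeisenberg μ)
include hb

theorem z_right (v : V) : μ v (b (inr (inr ()))) = 0 := by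
  rw [hb.antisymm, hb.z_left, neg_zero]

theorem x_y_eq_ite (i j : Fin m) :
    μ (b (inl i)) (b (inr (inl j))) = if i = j then b (inr (inr ())) else 0 := by
  split_ifs with h
  · exact h ▸ hb.x_y i
  · exact hb.x_y_of_ne i j h

theorem y_x_eq_ite (i j : Fin m) :
    μ (b (inr (inl i))) (b (inl j)) = if j = i then -b (inr (inr ())) else 0 := by
  rw [hb.antisymm, hb.x_y_eq_ite]
  split_ifs <;> simp

theorem isHeisenbergBracket :
    IsHeisenbergBracket_s13 μ (b (inr (inr ()))) (b.coord (inr (inr ()))) b.heisenbergSharp where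
  antisymm := hb.antisymm
  eq_coord_smul := by
    have h : μ = μ.compr₂ ((b.coord (inr (inr ()))).smulRight (b (inr (inr ())))) := by
      refine b.ext fun i => b.ext fun j => ?_
      rcases i with i | i | ⟨⟩ <;> rcases j with j | j | ⟨⟩ <;>
        simp [hb.x_y_eq_ite, hb.y_x_eq_ite, hb.x_x, hb.y_y, hb.z_left, hb.z_right,
          apply_ite (b.coord _), ite_smul]
    exact fun u v => LinearMap.congr_fun₂ h u v
  coord_self := by simp
  sharp_add_coord_smul := by
    have h : b.heisenbergSharp ∘ₗ μ.compr₂ (b.coord (inr (inr ())))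
        + (b.coord (inr (inr ()))).smulRight (b (inr (inr ()))) = LinearMap.id := by
      refine b.ext fun i => ?_
      rcases i with i | i | ⟨⟩ <;>
        simp [hb.x_y_eq_ite, hb.y_x_eq_ite, hb.x_x, hb.y_y, hb.z_left, apply_ite, ite_smul]
    exact fun s => LinearMap.congr_fun h s
  coord_sharp := by
    intro φ
    have h : b.coord (inr (inr ())) ∘ₗ μ (b.heisenbergSharp φ)
        = φ - (b.coord (inr (inr ()))).smulRight (φ (b (inr (inr ())))) := by
      refine b.ext fun i => ?_
      rcases i with i | i | ⟨⟩ <;>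
        simp [hb.x_y_eq_ite, hb.y_x_eq_ite, hb.x_x, hb.y_y, hb.z_right, apply_ite]
    exact fun w => LinearMap.congr_fun h w

end IsHeisenberg

end Module.Basis

end

theorem heisenberg_two_nil_cocycle_is_coboundary_general (K V : Type*) [Field K] [CharZero K]
    [AddCommGroup V] [Module K V]
    (m : ℕ)
    (b : Module.Basis (Fin m ⊕ (Fin m ⊕ Unit)) K V)
    (μ : V →ₗ[K] V →ₗ[K] V)
    (hμa : ∀ u v : V, μ u v = - μ v u)
    (hxy : ∀ i : Fin m, μ (b (Sum.inl i)) (b (Sum.inr (Sum.inl i))) = b (Sum.inr (Sum.inr ())))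
    (hxy' : ∀ i j : Fin m, i ≠ j → μ (b (Sum.inl i)) (b (Sum.inr (Sum.inl j))) = 0)
    (hxx : ∀ i j : Fin m, μ (b (Sum.inl i)) (b (Sum.inl j)) = 0)
    (hyy : ∀ i j : Fin m, μ (b (Sum.inr (Sum.inl i))) (b (Sum.inr (Sum.inl j))) = 0)
    (hz : ∀ v : V, μ (b (Sum.inr (Sum.inr ()))) v = 0)
    (σ : V →ₗ[K] V →ₗ[K] V)
    (hσa : ∀ u v : V, σ u v = - σ v u)
    (hη : ∀ x y z : V, μ (σ x y) z + σ (μ x y) z = 0) :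
    ∃ f : V →ₗ[K] V, ∀ x y : V, σ x y = μ (f x) y + μ x (f y) - f (μ x y) :=
  have hb : b.IsHeisenberg μ := ⟨hμa, hxy, hxy', hxx, hyy, hz⟩
  hb.isHeisenbergBracket.exists_coboundary_eq_of_nil hσa hη

/-- Every σ ∈ Z²_{2-nil}(μ,μ) for the Heisenberg Lie algebra h_m is a coboundary:
there is a linear f with σ = δ¹f. In particular H²_{2-nil}(μ,μ) = 0. -/
theorem heisenberg_two_nil_cocycle_is_coboundary (K V : Type*) [Field K] [CharZero K]
    [AddCommGroup V] [Module K V]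
    (m : ℕ) (hm : 0 < m)
    (b : Module.Basis (Fin m ⊕ (Fin m ⊕ Unit)) K V)
    (μ : V →ₗ[K] V →ₗ[K] V)
    (hμa : ∀ u v : V, μ u v = - μ v u)
    (hxy : ∀ i : Fin m, μ (b (Sum.inl i)) (b (Sum.inr (Sum.inl i))) = b (Sum.inr (Sum.inr ())))
    (hxy' : ∀ i j : Fin m, i ≠ j → μ (b (Sum.inl i)) (b (Sum.inr (Sum.inl j))) = 0)
    (hxx : ∀ i j : Fin m, μ (b (Sum.inl i)) (b (Sum.inl j)) = 0)
    (hyy : ∀ i j : Fin m, μ (b (Sum.inr (Sum.inl i))) (b (Sum.inr (Sum.inl j))) = 0)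
    (hz : ∀ v : V, μ (b (Sum.inr (Sum.inr ()))) v = 0)
    (σ : V →ₗ[K] V →ₗ[K] V)
    (hσa : ∀ u v : V, σ u v = - σ v u)
    (hδ : ∀ x y z : V,
      (μ (σ x y) z + σ (μ x y) z) + (μ (σ y z) x + σ (μ y z) x) +
      (μ (σ z x) y + σ (μ z x) y) = 0)
    (hη : ∀ x y z : V, μ (σ x y) z + σ (μ x y) z = 0) :
    ∃ f : V →ₗ[K] V, ∀ x y : V, σ x y = μ (f x) y + μ x (f y) - f (μ x y) :=
  heisenberg_two_nil_cocycle_is_coboundary_general K V m b μ hμa hxy hxy' hxx hyy hz σ hσa hη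
end

section
/- Let μ be a k-step nilpotent Lie bracket on K^n and σ a 2-cocycle for μ satisfying η_k(σ) = Σ_{j=0}^{k-1} μ^{k−1−j} ∘ σ ∘ μ^j = 0. Suppose f : K^n → K^n is linear with σ = δ¹f. Then for every i ≥ k, the (i+1)-multilinear map Σ_{j=0}^{i−1} μ^{i−1−j} ∘ σ ∘ μ^j vanishes identically. -/
/-- The j-th term (μ^{i−1−j} ∘ σ ∘ μ^j) of η_i, evaluated on the arguments
(x, l₁, …, l_i) where l has length i. -/
def etaTerm {K V : Type*} [Field K] [AddCommGroup V] [Module K V]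
    (μ σ : V →ₗ[K] V →ₗ[K] V) (x : V) (l : List V) (j : ℕ) : V :=
  leftBracket μ (σ (leftBracket μ x (l.take j)) (l.getD j 0)) (l.drop (j + 1))

section Aux
variable {K V : Type*} [Field K] [AddCommGroup V] [Module K V]
  (μ : V →ₗ[K] V →ₗ[K] V)

lemma leftBracket_zero (l : List V) : leftBracket μ 0 l = 0 := by
  induction l with
  | nil => rfl
  | cons b t ih =>
    show leftBracket μ (μ 0 b) t = 0
    rw [show μ (0 : V) = 0 from map_zero μ]
    simpa using ih

lemma leftBracket_add (a b : V) (l : List V) :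
    leftBracket μ (a + b) l = leftBracket μ a l + leftBracket μ b l := by
  induction l generalizing a b with
  | nil => rfl
  | cons c t ih =>
    show leftBracket μ (μ (a + b) c) t = leftBracket μ (μ a c) t + leftBracket μ (μ b c) t
    rw [show μ (a + b) c = μ a c + μ b c by rw [map_add]; rfl]
    exact ih _ _

lemma leftBracket_sub (a b : V) (l : List V) :
    leftBracket μ (a - b) l = leftBracket μ a l - leftBracket μ b l := by
  induction l generalizing a b with
  | nil => rfl
  | cons c t ih =>
    show leftBracket μ (μ (a - b) c) t = leftBracket μ (μ a c) t - leftBracket μ (μ b c) t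
    rw [show μ (a - b) c = μ a c - μ b c by rw [map_sub]; rfl]
    exact ih _ _

lemma leftBracket_append (x : V) (l₁ l₂ : List V) :
    leftBracket μ x (l₁ ++ l₂) = leftBracket μ (leftBracket μ x l₁) l₂ :=
  List.foldl_append ..

lemma leftBracket_long {k : ℕ}
    (hnil : ∀ (x : V) (l : List V), l.length = k → leftBracket μ x l = 0)
    (x : V) (l : List V) (h : k ≤ l.length) : leftBracket μ x l = 0 := by
  have h1 : leftBracket μ x (l.take k) = 0 :=
    hnil x _ (by simp [min_eq_left h])
  calc leftBracket μ x l = leftBracket μ x (l.take k ++ l.drop k) := by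
        rw [List.take_append_drop]
    _ = leftBracket μ (leftBracket μ x (l.take k)) (l.drop k) := leftBracket_append ..
    _ = 0 := by rw [h1]; exact leftBracket_zero μ _

end Aux

/-- If μ is a k-step nilpotent Lie bracket on K^n, σ a 2-cocycle with η_k(σ) = 0, and
σ = δ¹f for a linear f, then Σ_{j=0}^{i−1} μ^{i−1−j}∘σ∘μ^j = 0 for every i ≥ k. -/
theorem eta_vanishes_above_k (K : Type*) [Field K] [CharZero K] (n k : ℕ) (hk : 0 < k)
    (μ σ : (Fin n → K) →ₗ[K] (Fin n → K) →ₗ[K] (Fin n → K))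
    (hμa : ∀ u v, μ u v = - μ v u)
    (hμj : ∀ u v w, μ (μ u v) w + μ (μ v w) u + μ (μ w u) v = 0)
    (hσa : ∀ u v, σ u v = - σ v u)
    (hnil : ∀ (x : Fin n → K) (l : List (Fin n → K)), l.length = k → leftBracket μ x l = 0)
    (hδ : ∀ x y z,
      (μ (σ x y) z + σ (μ x y) z) + (μ (σ y z) x + σ (μ y z) x) +
      (μ (σ z x) y + σ (μ z x) y) = 0)
    (hη : ∀ (x : Fin n → K) (l : List (Fin n → K)), l.length = k →
      ∑ j ∈ Finset.range k, etaTerm μ σ x l j = 0)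
    (f : (Fin n → K) →ₗ[K] (Fin n → K))
    (hf : ∀ x y, σ x y = μ (f x) y + μ x (f y) - f (μ x y)) :
    ∀ i, k ≤ i → ∀ (x : Fin n → K) (l : List (Fin n → K)), l.length = i →
      ∑ j ∈ Finset.range i, etaTerm μ σ x l j = 0 := by
  intro i hi x l hl
  set T : ℕ → (Fin n → K) :=
    fun j => leftBracket μ (f (leftBracket μ x (l.take j))) (l.drop j) with hT
  have key : ∀ j ∈ Finset.range i, etaTerm μ σ x l j = T j - T (j + 1) := by
    intro j hj
    rw [Finset.mem_range] at hj
    have hjl : j < l.length := hl ▸ hj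
    set y := leftBracket μ x (l.take j) with hy
    set c := l.getD j 0 with hc
    have hcget : c = l[j] := by
      rw [hc, List.getD_eq_getElem?_getD, List.getElem?_eq_getElem hjl]; rfl
    -- drop j = c :: drop (j+1)
    have hdrop : l.drop j = c :: l.drop (j + 1) := by
      rw [List.drop_eq_getElem_cons hjl, hcget]
    -- take (j+1) = take j ++ [c]
    have htake : l.take (j + 1) = l.take j ++ [c] := by
      rw [List.take_succ, List.getElem?_eq_getElem hjl, hcget]; rfl
    have e1 : leftBracket μ (μ (f y) c) (l.drop (j + 1)) = T j := by
      rw [hT]; simp only [← hy]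
      rw [hdrop]; rfl
    have e2 : leftBracket μ (μ y (f c)) (l.drop (j + 1)) = 0 := by
      have : leftBracket μ (μ y (f c)) (l.drop (j + 1))
          = leftBracket μ x (l.take j ++ f c :: l.drop (j + 1)) := by
        rw [leftBracket_append, ← hy]; rfl
      rw [this]
      apply leftBracket_long μ hnil
      simp only [List.length_append, List.length_take, List.length_cons, List.length_drop, hl]
      omega
    have e3 : leftBracket μ (f (μ y c)) (l.drop (j + 1)) = T (j + 1) := by
      have h4 : leftBracket μ x (l.take (j + 1)) = μ y c := by
        rw [htake, leftBracket_append, ← hy]; rfl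
      show _ = leftBracket μ (f (leftBracket μ x (l.take (j + 1)))) (l.drop (j + 1))
      rw [h4]
    show leftBracket μ (σ y c) (l.drop (j + 1)) = T j - T (j + 1)
    rw [hf, leftBracket_sub, leftBracket_add, e1, e2, e3, add_zero]
  rw [Finset.sum_congr rfl key, Finset.sum_range_sub']
  have hlen : k ≤ l.length := le_of_le_of_eq hi hl.symm
  have hT0 : T 0 = 0 := leftBracket_long μ hnil (f x) l hlen
  have hTi : T i = 0 := by
    show leftBracket μ (f (leftBracket μ x (l.take i))) (l.drop i) = 0
    rw [← hl, List.take_length, List.drop_length,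
      show leftBracket μ (f (leftBracket μ x l)) [] = f (leftBracket μ x l) from rfl,
      leftBracket_long μ hnil x l hlen, map_zero]
  rw [hT0, hTi, sub_zero]
end

section
/- Let g be a Lie algebra over a field of characteristic zero that is not perfect, i.e., [g,g] ≠ g, and let ḡ = g ⊕ Ka be the direct sum with a 1-dimensional abelian factor spanned by a. Choose b ∈ g with b ∉ [g,g]. Then with a₁ = a, a₂ = b, h a complementary subalgebra, and y = a, the bilinear map μ_t = μ + t(a₁* ∧ a₂* ⊗ a) is a Lie bracket on ḡ for all t, and for t ≠ 0 its derived subalgebra has strictly larger dimension than that of ḡ; hence μ_t is not isomorphic to the original bracket for t ≠ 0. -/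
/-- A non-perfect Lie algebra g plus a 1-dimensional abelian factor Ka is non-rigid:
with b ∈ g, b ∉ [g,g], and h a complementary subalgebra containing [ḡ,ḡ],
μ_t = μ + t(a* ∧ b* ⊗ a) is a Lie bracket for all t whose derived subalgebra has
strictly larger dimension than that of μ whenever t ≠ 0. -/
theorem nonperfect_abelian_factor_nonrigid (K V : Type*) [Field K] [CharZero K]
    [AddCommGroup V] [Module K V] [FiniteDimensional K V]
    (μ : V →ₗ[K] V →ₗ[K] V)
    (hμa : ∀ u v : V, μ u v = - μ v u)
    (hμj : ∀ u v w : V, μ (μ u v) w + μ (μ v w) u + μ (μ w u) v = 0)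
    (a : V) (hacentral : ∀ v : V, μ a v = 0)
    (G : Submodule K V) (hGsub : ∀ u ∈ G, ∀ v ∈ G, μ u v ∈ G)
    (b : V) (hbG : b ∈ G)
    (hb : b ∉ Submodule.span K {x : V | ∃ u v : V, x = μ u v})
    (c₁ c₂ : V →ₗ[K] K)
    (h11 : c₁ a = 1) (h12 : c₁ b = 0) (h21 : c₂ a = 0) (h22 : c₂ b = 1)
    (hGc : ∀ v ∈ G, c₁ v = 0) (hGdec : ∀ v : V, v - c₁ v • a ∈ G)
    (h : Submodule K V) (hsub : ∀ u ∈ h, ∀ v ∈ h, μ u v ∈ h)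
    (hc₁h : ∀ w ∈ h, c₁ w = 0) (hc₂h : ∀ w ∈ h, c₂ w = 0)
    (hdec : ∀ v : V, v - c₁ v • a - c₂ v • b ∈ h)
    (hder : Submodule.span K {x : V | ∃ u v : V, x = μ u v} ≤ h)
    (t : K) :
    letI μt : V → V → V := fun u v => μ u v + t • ((c₁ u * c₂ v - c₂ u * c₁ v) • a)
    ((∀ u v : V, μt u v = - μt v u) ∧
     (∀ u v w : V, μt (μt u v) w + μt (μt v w) u + μt (μt w u) v = 0)) ∧
    (t ≠ 0 →
      Module.finrank K (Submodule.span K {x : V | ∃ u v : V, x = μ u v}) <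
      Module.finrank K (Submodule.span K {x : V | ∃ u v : V, x = μt u v})) := by
  set μt : V → V → V := fun u v => μ u v + t • ((c₁ u * c₂ v - c₂ u * c₁ v) • a) with hμt
  have hμva : ∀ v : V, μ v a = 0 := fun v => by rw [hμa]; simp [hacentral]
  have hmem : ∀ u v : V, μ u v ∈ Submodule.span K {x : V | ∃ u v : V, x = μ u v} :=
    fun u v => Submodule.subset_span ⟨u, v, rfl⟩
  have hc₁μ : ∀ u v : V, c₁ (μ u v) = 0 := fun u v => hc₁h _ (hder (hmem u v))
  have hc₂μ : ∀ u v : V, c₂ (μ u v) = 0 := fun u v => hc₂h _ (hder (hmem u v))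
  have key : ∀ u v w : V, μt (μt u v) w =
      μ (μ u v) w + ((t * t * (c₁ u * c₂ v - c₂ u * c₁ v)) * c₂ w) • a := by
    intro u v w
    show μ (μ u v + t • ((c₁ u * c₂ v - c₂ u * c₁ v) • a)) w
        + t • ((c₁ (μ u v + t • ((c₁ u * c₂ v - c₂ u * c₁ v) • a)) * c₂ w
            - c₂ (μ u v + t • ((c₁ u * c₂ v - c₂ u * c₁ v) • a)) * c₁ w) • a) = _
    simp [map_add, map_smul, hacentral, hμva, hc₁μ, hc₂μ, h11, h21, smul_smul]
    ring_nf
  constructor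
  · constructor
    · intro u v
      show μ u v + _ = -(μ v u + _)
      rw [hμa u v]
      module
    · intro u v w
      rw [key u v w, key v w u, key w u v]
      have := hμj u v w
      rw [show μ (μ u v) w + ((t * t * (c₁ u * c₂ v - c₂ u * c₁ v)) * c₂ w) • a
            + (μ (μ v w) u + ((t * t * (c₁ v * c₂ w - c₂ v * c₁ w)) * c₂ u) • a)
            + (μ (μ w u) v + ((t * t * (c₁ w * c₂ u - c₂ w * c₁ u)) * c₂ v) • a)
          = μ (μ u v) w + μ (μ v w) u + μ (μ w u) v
            + (((t * t * (c₁ u * c₂ v - c₂ u * c₁ v)) * c₂ w)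
              + ((t * t * (c₁ v * c₂ w - c₂ v * c₁ w)) * c₂ u)
              + ((t * t * (c₁ w * c₂ u - c₂ w * c₁ u)) * c₂ v)) • a by module]
      rw [this]
      have hz : (((t * t * (c₁ u * c₂ v - c₂ u * c₁ v)) * c₂ w)
              + ((t * t * (c₁ v * c₂ w - c₂ v * c₁ w)) * c₂ u)
              + ((t * t * (c₁ w * c₂ u - c₂ w * c₁ u)) * c₂ v)) = 0 := by ring
      rw [hz]; simp
  · intro ht
    set D := Submodule.span K {x : V | ∃ u v : V, x = μ u v} with hD
    set Dt := Submodule.span K {x : V | ∃ u v : V, x = μt u v} with hDt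
    have hmemt : ∀ u v : V, μt u v ∈ Dt := fun u v => Submodule.subset_span ⟨u, v, rfl⟩
    have haDt : a ∈ Dt := by
      have : μt a b = t • a := by
        show μ a b + _ = _
        simp [hacentral, h11, h22, h12, h21]
      have h' := hmemt a b
      rw [this] at h'
      have := Dt.smul_mem t⁻¹ h'
      rwa [smul_smul, inv_mul_cancel₀ ht, one_smul] at this
    have hle : D ≤ Dt := by
      rw [hD]
      apply Submodule.span_le.2
      rintro x ⟨u, v, rfl⟩
      have : μ u v = μt u v - t • ((c₁ u * c₂ v - c₂ u * c₁ v) • a) := by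
        show μ u v = μ u v + _ - _; abel
      rw [this]
      exact Dt.sub_mem (hmemt u v) (Dt.smul_mem _ (Dt.smul_mem _ haDt))
    have haD : a ∉ D := by
      intro haD
      have := hc₁h a (hder haD)
      rw [h11] at this
      exact one_ne_zero this
    exact Submodule.finrank_lt_finrank_of_lt (lt_of_le_of_ne hle (fun e => haD (e ▸ haDt)))
end

section
/- Let g = sl₂(K) ⋉ K² (semidirect product via the standard 2-dimensional representation) with basis a,b,c,d,e and brackets [a,b]=2b, [a,c]=−2c, [b,c]=a, [a,d]=d, [a,e]=−e, [b,e]=d, [c,d]=e, and let ḡ = g ⊕ Kf with f central. Then the bilinear map φ = d* ∧ e* ⊗ f is a 2-cocycle for the bracket of ḡ, and for every t ≠ 0 the deformed bracket [ , ]_t = [ , ] + tφ makes ḡ a perfect Lie algebra. -/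
/-!
The form `d* ∧ e*` is the determinant of the `K²` components; `sl₂` acts on `K²` by traceless
maps, so this form is invariant, which is exactly the cocycle identity for trivial coefficients.
Since `f` is central, tensoring with `f` turns it into a 2-cocycle of `ḡ`. For perfectness, each
of `a, …, e` is, up to a nonzero scalar, the bracket of two basis vectors on which `φ` vanishes,
while `[d, e]_t = t f`.
-/

open Module

namespace LinearMap

variable {R M N : Type*} [CommRing R] [AddCommGroup M] [Module R M] [AddCommGroup N] [Module R N]

lemma isAlt_of_antisymm [IsDomain R] [Module.IsTorsionFree R N] [NeZero (2 : R)]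
    {B : M →ₗ[R] M →ₗ[R] N} (h : ∀ u v, B u v = -B v u) : B.IsAlt := fun x => by
  have : (2 : R) • B x x = 0 := by
    rw [two_smul]
    nth_rewrite 1 [h]
    exact neg_add_cancel _
  exact (smul_eq_zero_iff_right two_ne_zero).mp this

lemma IsAlt.ext_basis {ι : Type*} [LinearOrder ι] (b : Basis ι R M) {B B' : M →ₗ[R] M →ₗ[R] N}
    (hB : B.IsAlt) (hB' : B'.IsAlt) (h : ∀ i j, i < j → B (b i) (b j) = B' (b i) (b j)) :
    B = B' :=
  LinearMap.ext_basis b b fun i j => by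
    rcases lt_trichotomy i j with hij | rfl | hij
    · exact h i j hij
    · rw [hB.self_eq_zero, hB'.self_eq_zero]
    · rw [← hB.neg, ← hB'.neg, h j i hij]

end LinearMap

namespace Module.Basis

variable {ι R M : Type*} [CommRing R] [AddCommGroup M] [Module R M]

noncomputable def coordWedge (b : Basis ι R M) (i j : ι) : M →ₗ[R] M →ₗ[R] R :=
  (LinearMap.mul R R).compl₁₂ (b.coord i) (b.coord j) -
    (LinearMap.mul R R).compl₁₂ (b.coord j) (b.coord i)

@[simp]
lemma coordWedge_apply (b : Basis ι R M) (i j : ι) (u v : M) :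
    b.coordWedge i j u v = b.coord i u * b.coord j v - b.coord j u * b.coord i v :=
  rfl

lemma isAlt_coordWedge (b : Basis ι R M) (i j : ι) : (b.coordWedge i j).IsAlt := fun x => by
  simp [mul_comm]

end Module.Basis

lemma cyclic_sum_smul_central {R M : Type*} [CommRing R] [AddCommGroup M] [Module R M]
    {μ : M →ₗ[R] M →ₗ[R] M} {f : M} (hf : μ f = 0) {ω : M → M → R}
    (hω : ∀ x y z, ω (μ x y) z + ω (μ y z) x + ω (μ z x) y = 0) (x y z : M) :
    (μ (ω x y • f) z + ω (μ x y) z • f) + (μ (ω y z • f) x + ω (μ y z) x • f) +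
      (μ (ω z x • f) y + ω (μ z x) y • f) = 0 := by
  simp only [map_smul, hf, LinearMap.zero_apply, smul_zero, zero_add]
  rw [← add_smul, ← add_smul, hω, zero_smul]

section GBar

variable {K V : Type*} [Field K] [AddCommGroup V] [Module K V]

/-- The bracket of `ḡ = (sl₂ ⋉ K²) ⊕ K f` in the basis `a, b, c, d, e, f = b 0, …, b 5`. -/
structure IsGBarBracket (b : Basis (Fin 6) K V) (μ : V →ₗ[K] V →ₗ[K] V) : Prop where
  antisymm : ∀ u v : V, μ u v = - μ v u
  ab : μ (b 0) (b 1) = (2 : K) • b 1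
  ac : μ (b 0) (b 2) = (-2 : K) • b 2
  ad : μ (b 0) (b 3) = b 3
  ae : μ (b 0) (b 4) = - b 4
  af : μ (b 0) (b 5) = 0
  bc : μ (b 1) (b 2) = b 0
  bd : μ (b 1) (b 3) = 0
  be : μ (b 1) (b 4) = b 3
  bf : μ (b 1) (b 5) = 0
  cd : μ (b 2) (b 3) = b 4
  ce : μ (b 2) (b 4) = 0
  cf : μ (b 2) (b 5) = 0
  de : μ (b 3) (b 4) = 0
  df : μ (b 3) (b 5) = 0
  ef : μ (b 4) (b 5) = 0

namespace IsGBarBracket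

variable {b : Basis (Fin 6) K V} {μ : V →ₗ[K] V →ₗ[K] V}

lemma isAlt [CharZero K] (h : IsGBarBracket b μ) : μ.IsAlt :=
  LinearMap.isAlt_of_antisymm h.antisymm

lemma apply_f_eq_zero [CharZero K] (h : IsGBarBracket b μ) : μ (b 5) = 0 :=
  b.ext fun i => by
    rw [← h.isAlt.neg, LinearMap.zero_apply, neg_eq_zero]
    fin_cases i
    exacts [h.af, h.bf, h.cf, h.df, h.ef, h.isAlt.self_eq_zero _]

lemma compr₂_coord_d [CharZero K] (h : IsGBarBracket b μ) :
    μ.compr₂ (b.coord 3) = b.coordWedge 0 3 + b.coordWedge 1 4 :=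
  LinearMap.IsAlt.ext_basis b (fun x => by simp [h.isAlt.self_eq_zero x])
    (fun x => by simp [mul_comm]) fun i j hij => by
    fin_cases i <;> fin_cases j <;>
      simp_all [h.ab, h.ac, h.ad, h.ae, h.af, h.bc, h.bd, h.be, h.bf, h.cd, h.ce, h.cf, h.de,
        h.df, h.ef]

lemma compr₂_coord_e [CharZero K] (h : IsGBarBracket b μ) :
    μ.compr₂ (b.coord 4) = -b.coordWedge 0 4 + b.coordWedge 2 3 :=
  LinearMap.IsAlt.ext_basis b (fun x => by simp [h.isAlt.self_eq_zero x])
    (fun x => by simp [mul_comm]) fun i j hij => by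
    fin_cases i <;> fin_cases j <;>
      simp_all [h.ab, h.ac, h.ad, h.ae, h.af, h.bc, h.bd, h.be, h.bf, h.cd, h.ce, h.cf, h.de,
        h.df, h.ef]

lemma cyclic_sum_coordWedge_d_e [CharZero K] (h : IsGBarBracket b μ) (x y z : V) :
    b.coordWedge 3 4 (μ x y) z + b.coordWedge 3 4 (μ y z) x + b.coordWedge 3 4 (μ z x) y = 0 := by
  have hd := LinearMap.congr_fun₂ h.compr₂_coord_d
  have he := LinearMap.congr_fun₂ h.compr₂_coord_e
  simp only [LinearMap.compr₂_apply, LinearMap.add_apply, LinearMap.neg_apply,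
    Basis.coordWedge_apply] at hd he
  simp only [Basis.coordWedge_apply, hd, he]
  ring

lemma span_deformed_eq_top [CharZero K] (h : IsGBarBracket b μ) {t : K} (ht : t ≠ 0) :
    Submodule.span K {x : V | ∃ u v : V, x = μ u v + t • b.coordWedge 3 4 u v • b 5} = ⊤ := by
  set S := Submodule.span K {x : V | ∃ u v : V, x = μ u v + t • b.coordWedge 3 4 u v • b 5}
  have mem (i j : Fin 6) : μ (b i) (b j) + t • b.coordWedge 3 4 (b i) (b j) • b 5 ∈ S :=
    Submodule.subset_span ⟨_, _, rfl⟩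
  have two_ne : (2 : K) ≠ 0 := two_ne_zero
  have basis_mem : ∀ i, b i ∈ S := by
    intro i
    fin_cases i
    · simpa [h.bc] using mem 1 2
    · simpa [h.ab, Submodule.smul_mem_iff _ two_ne] using mem 0 1
    · simpa [h.ac, Submodule.smul_mem_iff _ two_ne] using mem 0 2
    · simpa [h.ad] using mem 0 3
    · simpa [h.ae] using mem 0 4
    · simpa [h.de, Submodule.smul_mem_iff _ ht] using mem 3 4
  rw [eq_top_iff, ← b.span_eq, Submodule.span_le]
  rintro _ ⟨i, rfl⟩
  exact basis_mem i

end IsGBarBracket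

end GBar

/-- For ḡ = (sl₂ ⋉ K²) ⊕ Kf with basis a,b,c,d,e,f (indices 0,…,5), the map
φ = d* ∧ e* ⊗ f is a 2-cocycle for the bracket, and for every t ≠ 0 the deformed
bracket μ + tφ makes ḡ a perfect Lie algebra. -/
theorem sl2_semidirect_plus_abelian_deformation (K V : Type*) [Field K] [CharZero K]
    [AddCommGroup V] [Module K V]
    (b : Module.Basis (Fin 6) K V)
    (μ : V →ₗ[K] V →ₗ[K] V)
    (hμa : ∀ u v : V, μ u v = - μ v u)
    (hab : μ (b 0) (b 1) = (2 : K) • b 1)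
    (hac : μ (b 0) (b 2) = (-2 : K) • b 2)
    (had : μ (b 0) (b 3) = b 3)
    (hae : μ (b 0) (b 4) = - b 4)
    (haf : μ (b 0) (b 5) = 0)
    (hbc : μ (b 1) (b 2) = b 0)
    (hbd : μ (b 1) (b 3) = 0)
    (hbe : μ (b 1) (b 4) = b 3)
    (hbf : μ (b 1) (b 5) = 0)
    (hcd : μ (b 2) (b 3) = b 4)
    (hce : μ (b 2) (b 4) = 0)
    (hcf : μ (b 2) (b 5) = 0)
    (hde : μ (b 3) (b 4) = 0)
    (hdf : μ (b 3) (b 5) = 0)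
    (hef : μ (b 4) (b 5) = 0) :
    letI φ : V → V → V := fun u v =>
      (b.coord 3 u * b.coord 4 v - b.coord 4 u * b.coord 3 v) • b 5
    (∀ x y z : V,
      (μ (φ x y) z + φ (μ x y) z) + (μ (φ y z) x + φ (μ y z) x) +
      (μ (φ z x) y + φ (μ z x) y) = 0) ∧
    (∀ t : K, t ≠ 0 →
      Submodule.span K {x : V | ∃ u v : V, x = μ u v + t • φ u v} = ⊤) := by
  have h : IsGBarBracket b μ :=
    ⟨hμa, hab, hac, had, hae, haf, hbc, hbd, hbe, hbf, hcd, hce, hcf, hde, hdf, hef⟩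
  exact ⟨cyclic_sum_smul_central h.apply_f_eq_zero h.cyclic_sum_coordWedge_d_e,
    fun t ht => h.span_deformed_eq_top ht⟩
end

section
/- Up to isomorphism, there are exactly two nilpotent Lie algebras of dimension 4 over an algebraically closed field of characteristic zero that are at most 2-step nilpotent: the abelian algebra a₄ and h₁ ⊕ a₁, the 3-dimensional Heisenberg algebra plus a 1-dimensional abelian factor. -/
/-!
If `[x, y] = z ≠ 0`, then `x`, `y` and any independent family of elements commuting with both
are linearly independent (bracket a relation with `x`, then with `y`). When `L` is 2-step
nilpotent every bracket commutes with everything, so were `[x, w] ∉ K z`, the vectors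
`x, y, z, [x, w]` would be a basis of `L` on which `ad x` takes values in `K z`, forcing
`[x, w] ∈ K z`. Hence `ad x` and `ad y` both map into `K z`, and for `w` outside
`span {x, y, z}` a correction `u = w - a y - c x` is central, giving the basis `x, y, z, u`.
-/

open Module Submodule

section

variable {K L : Type*} [Field K] [LieRing L] [LieAlgebra K L]

theorem lie_eq_zero_of_mem_span {x u : L} {s : Set L} (hs : ∀ v ∈ s, ⁅x, v⁆ = 0)
    (hu : u ∈ span K s) : ⁅x, u⁆ = 0 :=
  (span_le (p := LinearMap.ker (LieAlgebra.ad K L x)).2 hs) hu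

theorem linearIndependent_cons_cons_of_lie_ne_zero {n : ℕ} {x y : L} (hxy : ⁅x, y⁆ ≠ 0)
    {v : Fin n → L} (hv : LinearIndependent K v) (hvx : ∀ i, ⁅x, v i⁆ = 0)
    (hvy : ∀ i, ⁅y, v i⁆ = 0) :
    LinearIndependent K (Fin.cons x (Fin.cons y v : Fin (n + 1) → L) : Fin (n + 2) → L) := by
  refine linearIndependent_finCons.2
    ⟨linearIndependent_finCons.2 ⟨hv, fun hy => ?_⟩, fun hx => ?_⟩
  · exact hxy (lie_eq_zero_of_mem_span (by simpa using hvx) hy)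
  · have hyx : ⁅y, x⁆ = 0 := lie_eq_zero_of_mem_span (by simpa [Fin.range_cons] using hvy) hx
    exact hxy (by rw [← lie_skew, hyx, neg_zero])

theorem lie_lie_right_eq_zero (h2 : ∀ x y z : L, ⁅⁅x, y⁆, z⁆ = 0) (x y z : L) :
    ⁅x, ⁅y, z⁆⁆ = 0 := by
  rw [← lie_skew, h2, neg_zero]

theorem lie_mem_span_lie_of_finrank_eq_four (h4 : finrank K L = 4)
    (h2 : ∀ x y z : L, ⁅⁅x, y⁆, z⁆ = 0) {x y : L} (hxy : ⁅x, y⁆ ≠ 0) (w : L) :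
    ⁅x, w⁆ ∈ K ∙ ⁅x, y⁆ := by
  by_contra hw
  have hpair : LinearIndependent K ![⁅x, y⁆, ⁅x, w⁆] :=
    (LinearIndependent.pair_iff' hxy).2 fun a ha => hw (mem_span_singleton.2 ⟨a, ha⟩)
  have hb : LinearIndependent K ![x, y, ⁅x, y⁆, ⁅x, w⁆] :=
    linearIndependent_cons_cons_of_lie_ne_zero hxy hpair
      (by simp [Fin.forall_fin_two, lie_lie_right_eq_zero h2])
      (by simp [Fin.forall_fin_two, lie_lie_right_eq_zero h2])
  have hspan := hb.span_eq_top_of_card_eq_finrank (by simp [h4])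
  have hle : span K (Set.range ![x, y, ⁅x, y⁆, ⁅x, w⁆]) ≤
      (K ∙ ⁅x, y⁆).comap (LieAlgebra.ad K L x) := by
    rw [span_le]
    rintro _ ⟨i, rfl⟩
    fin_cases i <;> simp [lie_lie_right_eq_zero h2, mem_span_singleton_self]
  exact hw (hle (hspan ▸ mem_top))

theorem exists_heisenberg_basis_of_lie_ne_zero (h4 : finrank K L = 4)
    (h2 : ∀ x y z : L, ⁅⁅x, y⁆, z⁆ = 0) {x y : L} (hxy : ⁅x, y⁆ ≠ 0) :
    ∃ b : Basis (Fin 4) K L, ⁅b 0, b 1⁆ = b 2 ∧ ⁅b 0, b 2⁆ = 0 ∧ ⁅b 0, b 3⁆ = 0 ∧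
      ⁅b 1, b 2⁆ = 0 ∧ ⁅b 1, b 3⁆ = 0 ∧ ⁅b 2, b 3⁆ = 0 := by
  have hyx : ⁅y, x⁆ ≠ 0 := by rwa [← lie_skew, neg_ne_zero]
  obtain ⟨w, hw⟩ : ∃ w, w ∉ span K (Set.range ![x, y, ⁅x, y⁆]) := by
    by_contra! h
    have := finrank_le_of_span_eq_top (eq_top_iff.2 fun w _ => h w)
    simp [h4] at this
  obtain ⟨a, ha⟩ := mem_span_singleton.1 (lie_mem_span_lie_of_finrank_eq_four h4 h2 hxy w)
  obtain ⟨c, hc⟩ := mem_span_singleton.1 (lie_mem_span_lie_of_finrank_eq_four h4 h2 hyx w)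
  set u := w - a • y - c • x
  have hxu : ⁅x, u⁆ = 0 := by simp [u, ← ha]
  have hyu : ⁅y, u⁆ = 0 := by simp [u, ← hc]
  have hu : u ∉ K ∙ ⁅x, y⁆ := by
    intro hu
    have hw' : w = u + a • y + c • x := by simp only [u]; abel
    rw [hw'] at hw
    refine hw (add_mem (add_mem ?_ (smul_mem _ _ ?_)) (smul_mem _ _ ?_))
    · exact span_mono (Set.singleton_subset_iff.2 (Set.mem_range_self 2)) hu
    · exact subset_span ⟨1, rfl⟩
    · exact subset_span ⟨0, rfl⟩
  have hpair : LinearIndependent K ![⁅x, y⁆, u] :=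
    (LinearIndependent.pair_iff' hxy).2 fun a ha => hu (mem_span_singleton.2 ⟨a, ha⟩)
  have hb : LinearIndependent K ![x, y, ⁅x, y⁆, u] :=
    linearIndependent_cons_cons_of_lie_ne_zero hxy hpair
      (by simp [Fin.forall_fin_two, lie_lie_right_eq_zero h2, hxu])
      (by simp [Fin.forall_fin_two, lie_lie_right_eq_zero h2, hyu])
  refine ⟨basisOfLinearIndependentOfCardEqFinrank hb (by simp [h4]), ?_⟩
  simp [lie_lie_right_eq_zero h2, h2, hxu, hyu]

end

theorem dim_four_two_step_nilpotent_classification_general (K L : Type*) [Field K]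
    [LieRing L] [LieAlgebra K L]
    (h4 : Module.finrank K L = 4)
    (h2 : ∀ x y z : L, ⁅⁅x, y⁆, z⁆ = 0) :
    ((∀ x y : L, ⁅x, y⁆ = 0) ∨
      (∃ b : Module.Basis (Fin 4) K L, ⁅b 0, b 1⁆ = b 2 ∧ ⁅b 0, b 2⁆ = 0 ∧ ⁅b 0, b 3⁆ = 0 ∧
        ⁅b 1, b 2⁆ = 0 ∧ ⁅b 1, b 3⁆ = 0 ∧ ⁅b 2, b 3⁆ = 0)) ∧
    ¬((∀ x y : L, ⁅x, y⁆ = 0) ∧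
      (∃ b : Module.Basis (Fin 4) K L, ⁅b 0, b 1⁆ = b 2 ∧ ⁅b 0, b 2⁆ = 0 ∧ ⁅b 0, b 3⁆ = 0 ∧
        ⁅b 1, b 2⁆ = 0 ∧ ⁅b 1, b 3⁆ = 0 ∧ ⁅b 2, b 3⁆ = 0)) := by
  refine ⟨or_iff_not_imp_left.2 fun hL => ?_, fun ⟨hL, b, hb, _⟩ => b.ne_zero 2 (hb ▸ hL _ _)⟩
  obtain ⟨x, y, hxy⟩ : ∃ x y : L, ⁅x, y⁆ ≠ 0 := by simpa using hL
  exact exists_heisenberg_basis_of_lie_ne_zero h4 h2 hxy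

/-- Up to isomorphism there are exactly two at most 2-step nilpotent Lie algebras of
dimension 4 over an algebraically closed field of characteristic zero: the abelian
one a₄, and h₁ ⊕ a₁ (which admits a basis with [b₀,b₁] = b₂ and all other brackets
of basis elements zero); moreover these two cases are mutually exclusive. -/
theorem dim_four_two_step_nilpotent_classification (K L : Type*) [Field K]
    [IsAlgClosed K] [CharZero K] [LieRing L] [LieAlgebra K L]
    (h4 : Module.finrank K L = 4)
    (h2 : ∀ x y z : L, ⁅⁅x, y⁆, z⁆ = 0) :
    ((∀ x y : L, ⁅x, y⁆ = 0) ∨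
      (∃ b : Module.Basis (Fin 4) K L, ⁅b 0, b 1⁆ = b 2 ∧ ⁅b 0, b 2⁆ = 0 ∧ ⁅b 0, b 3⁆ = 0 ∧
        ⁅b 1, b 2⁆ = 0 ∧ ⁅b 1, b 3⁆ = 0 ∧ ⁅b 2, b 3⁆ = 0)) ∧
    ¬((∀ x y : L, ⁅x, y⁆ = 0) ∧
      (∃ b : Module.Basis (Fin 4) K L, ⁅b 0, b 1⁆ = b 2 ∧ ⁅b 0, b 2⁆ = 0 ∧ ⁅b 0, b 3⁆ = 0 ∧
        ⁅b 1, b 2⁆ = 0 ∧ ⁅b 1, b 3⁆ = 0 ∧ ⁅b 2, b 3⁆ = 0)) :=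
  dim_four_two_step_nilpotent_classification_general K L h4 h2
end
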